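/- arXiv:1005.2029 — 9 statements merged into one kernel-verified Lean document; each statement's English description precedes it below -/
import Mathlib

section
/- Fix positive integers L and S and let β ∈ (0,1) satisfy Lβ + Sβ² = 1. Define the sequence (tₙ) by t₀ = 1, t₁ = L + S, and tₙ = L tₙ₋₁ + S tₙ₋₂ for n ≥ 2. Set A = (1 + Sβ)/(1 + Sβ²) and B = (Sβ − Sβ²)/(1 + Sβ²). Then for every n ≥ 0, tₙ = (A − B(−Sβ²)ⁿ)/βⁿ. -/
/-- Fix positive integers `L` and `S` and let `β ∈ (0,1)` satisfy `L β + S β² = 1`.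
Define `(tₙ)` by `t₀ = 1`, `t₁ = L + S`, `tₙ = L tₙ₋₁ + S tₙ₋₂`.
With `A = (1 + Sβ)/(1 + Sβ²)` and `B = (Sβ − Sβ²)/(1 + Sβ²)`, for every `n ≥ 0` we have
`tₙ = (A − B(−Sβ²)ⁿ)/βⁿ`. -/
theorem t_formula (L S : ℕ) (hL : 0 < L) (hS : 0 < S) (β : ℝ)
    (hβ0 : 0 < β) (hβ1 : β < 1) (hβ : (L : ℝ) * β + (S : ℝ) * β ^ 2 = 1)
    (t : ℕ → ℝ) (ht0 : t 0 = 1) (ht1 : t 1 = L + S)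
    (htrec : ∀ n, t (n + 2) = L * t (n + 1) + S * t n) :
    ∀ n : ℕ,
      t n = (((1 + (S : ℝ) * β) / (1 + (S : ℝ) * β ^ 2)) -
          (((S : ℝ) * β - (S : ℝ) * β ^ 2) / (1 + (S : ℝ) * β ^ 2)) *
            (-(S : ℝ) * β ^ 2) ^ n) / β ^ n := by
  have hb : β ≠ 0 := ne_of_gt hβ0
  have hd : (1:ℝ) + S * β ^ 2 ≠ 0 := by positivity
  have key : ∀ n, t n * β ^ n * (1 + (S:ℝ) * β ^ 2)
      = (1 + (S:ℝ) * β) - ((S:ℝ) * β - (S:ℝ) * β ^ 2) * (-(S:ℝ) * β ^ 2) ^ n := by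
    have key2 : ∀ n,
        t n * β ^ n * (1 + (S:ℝ) * β ^ 2)
          = (1 + (S:ℝ) * β) - ((S:ℝ) * β - (S:ℝ) * β ^ 2) * (-(S:ℝ) * β ^ 2) ^ n ∧
        t (n+1) * β ^ (n+1) * (1 + (S:ℝ) * β ^ 2)
          = (1 + (S:ℝ) * β) - ((S:ℝ) * β - (S:ℝ) * β ^ 2) * (-(S:ℝ) * β ^ 2) ^ (n+1) := by
      intro n
      induction n with
      | zero =>
        constructor
        · rw [ht0]; ring
        · rw [ht1]; linear_combination (1 + (S:ℝ) * β ^ 2) * hβ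
      | succ n ih =>
        refine ⟨ih.2, ?_⟩
        have hr : (-(S:ℝ) * β ^ 2) ^ (n + 2)
            = ((L:ℝ) * β) * (-(S:ℝ) * β ^ 2) ^ (n + 1)
              + ((S:ℝ) * β ^ 2) * (-(S:ℝ) * β ^ 2) ^ n := by
          have h2 : (-(S:ℝ) * β ^ 2) ^ (n + 2)
              = (-(S:ℝ) * β ^ 2) ^ n * (-(S:ℝ) * β ^ 2) ^ 2 := by ring
          have h1 : (-(S:ℝ) * β ^ 2) ^ (n + 1)
              = (-(S:ℝ) * β ^ 2) ^ n * (-(S:ℝ) * β ^ 2) := by ring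
          rw [h2, h1]
          linear_combination ((-(S:ℝ) * β ^ 2) ^ n * ((S:ℝ) * β ^ 2)) * hβ
        rw [htrec]
        linear_combination ((L:ℝ) * β) * ih.2 + ((S:ℝ) * β ^ 2) * ih.1
          + (1 + (S:ℝ) * β) * hβ + ((S:ℝ) * β - (S:ℝ) * β ^ 2) * hr
    exact fun n => (key2 n).1
  intro n
  have h := key n
  field_simp
  linear_combination h
end

section
/- Fix positive integers L and S and let β ∈ (0,1) satisfy Lβ + Sβ² = 1. Define (tₙ) by t₀ = 1, t₁ = L + S, tₙ = L tₙ₋₁ + S tₙ₋₂, and set B = (Sβ − Sβ²)/(1 + Sβ²). Then for all integers n ≥ p ≥ 0, tₙ₋ₚ/tₙ − βᵖ = −(B/tₙ)(−Sβ)ⁿ[(−Sβ)⁻ᵖ − βᵖ]. -/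
/-- Fix positive integers `L` and `S` and let `β ∈ (0,1)` satisfy `L β + S β² = 1`.
Define `(tₙ)` by `t₀ = 1`, `t₁ = L + S`, `tₙ = L tₙ₋₁ + S tₙ₋₂`, and set
`B = (Sβ − Sβ²)/(1 + Sβ²)`. Then for all `n ≥ p ≥ 0`,
`tₙ₋ₚ/tₙ − βᵖ = −(B/tₙ)(−Sβ)ⁿ[(−Sβ)⁻ᵖ − βᵖ]`. -/
theorem t_ratio_formula (L S : ℕ) (hL : 0 < L) (hS : 0 < S) (β : ℝ)
    (hβ0 : 0 < β) (hβ1 : β < 1) (hβ : (L : ℝ) * β + (S : ℝ) * β ^ 2 = 1)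
    (t : ℕ → ℝ) (ht0 : t 0 = 1) (ht1 : t 1 = L + S)
    (htrec : ∀ n, t (n + 2) = L * t (n + 1) + S * t n) :
    ∀ p n : ℕ, p ≤ n →
      t (n - p) / t n - β ^ p =
        -((((S : ℝ) * β - (S : ℝ) * β ^ 2) / (1 + (S : ℝ) * β ^ 2)) / t n) *
          (-((S : ℝ) * β)) ^ n * (((-((S : ℝ) * β)) ^ p)⁻¹ - β ^ p) := by
  have hβne : β ≠ 0 := ne_of_gt hβ0
  have hSpos : (0:ℝ) < S := by exact_mod_cast hS
  have hLpos : (0:ℝ) < L := by exact_mod_cast hL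
  have hSβ : -((S:ℝ) * β) ≠ 0 := neg_ne_zero.mpr (by positivity)
  have hdpos : (0:ℝ) < 1 + (S:ℝ) * β ^ 2 := by positivity
  have hdne : (1:ℝ) + (S:ℝ) * β ^ 2 ≠ 0 := ne_of_gt hdpos
  set c : ℝ := ((S:ℝ) * β ^ 2 - (S:ℝ) * β) / (1 + (S:ℝ) * β ^ 2) with hc
  -- closed form
  have key : ∀ n, t n = (1 - c) * (β⁻¹) ^ n + c * (-((S:ℝ) * β)) ^ n := by
    have hr1 : (L:ℝ) * β⁻¹ + S = (β⁻¹) ^ 2 := by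
      field_simp
      linear_combination hβ
    have hr2 : (L:ℝ) * (-((S:ℝ) * β)) + S = (-((S:ℝ) * β)) ^ 2 := by
      nlinarith [hβ]
    intro n
    induction n using Nat.twoStepInduction with
    | zero => simp [ht0]
    | one =>
      rw [ht1, hc]
      field_simp
      ring_nf
      linear_combination (1 + (S:ℝ)*β^2) * hβ
    | more n ih1 ih2 =>
      rw [htrec, ih1, ih2]
      linear_combination ((1 - c) * (β⁻¹) ^ n) * hr1 + (c * (-((S:ℝ) * β)) ^ n) * hr2
  -- positivity
  have tpos : ∀ n, 0 < t n := by
    intro n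
    induction n using Nat.twoStepInduction with
    | zero => rw [ht0]; norm_num
    | one => rw [ht1]; positivity
    | more n ih1 ih2 => rw [htrec]; positivity
  intro p n hpn
  obtain ⟨k, rfl⟩ := Nat.exists_eq_add_of_le hpn
  have hnp : p + k - p = k := Nat.add_sub_cancel_left p k
  rw [hnp]
  have hT : t (p + k) ≠ 0 := ne_of_gt (tpos (p + k))
  have main : t k - β ^ p * t (p + k) =
      c * ((-((S:ℝ) * β)) ^ k - β ^ p * (-((S:ℝ) * β)) ^ (p + k)) := by
    rw [key k, key (p + k)]
    field_simp
    have hb : β ^ p * β⁻¹ ^ p = 1 := by rw [← mul_pow, mul_inv_cancel₀ hβne, one_pow]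
    linear_combination (c - 1) * β⁻¹ ^ k * hb
  have e1 : (-((S:ℝ) * β)) ^ (p + k) * (((-((S:ℝ) * β)) ^ p)⁻¹ - β ^ p) =
      (-((S:ℝ) * β)) ^ k - β ^ p * (-((S:ℝ) * β)) ^ (p + k) := by
    rw [pow_add]
    field_simp [pow_ne_zero p hSβ]
  rw [div_sub' hT]
  rw [div_eq_iff hT]
  have : -((((S:ℝ) * β - (S:ℝ) * β ^ 2) / (1 + (S:ℝ) * β ^ 2)) / t (p + k)) *
      (-((S:ℝ) * β)) ^ (p + k) * (((-((S:ℝ) * β)) ^ p)⁻¹ - β ^ p) * t (p + k) =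
      c * ((-((S:ℝ) * β)) ^ (p + k) * (((-((S:ℝ) * β)) ^ p)⁻¹ - β ^ p)) := by
    rw [hc]
    field_simp [hc]
    ring
  rw [this, e1]
  linarith [main]
end

section
/- Fix positive integers L and S, let β ∈ (0,1) satisfy Lβ + Sβ² = 1, and let {ρⁿ} be the LS-sequence of partitions of [0,1), with left endpoints y₁ⁿ, …, y_{tₙ}ⁿ (where tₙ is the number of intervals of ρⁿ). For all integers n ≥ p ≥ 0 and every long interval Lₚ of ρₚ (i.e. an interval of length βᵖ), the number of points yⱼⁿ (1 ≤ j ≤ tₙ) lying in Lₚ equals tₙ₋ₚ. -/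
open Classical in
/-- The LS-sequence of partitions of `[0,1)`, encoded as the list of lengths of its
intervals, from left to right. -/
noncomputable def LSpart (L S : ℕ) (β : ℝ) : ℕ → List ℝ
  | 0 => [1]
  | n + 1 => (LSpart L S β n).flatMap (fun x =>
      if x = β ^ n then
        List.replicate L (β ^ (n + 1)) ++ List.replicate S (β ^ (n + 2))
      else [x])

/-- Left endpoint of the `j`-th (0-indexed) interval of `ρⁿ`: the sum of the lengths of
the preceding intervals. These are the points `y₁ⁿ, …, y_{tₙ}ⁿ`. -/
noncomputable def lep (L S : ℕ) (β : ℝ) (n j : ℕ) : ℝ := ((LSpart L S β n).take j).sum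

/-- Summing a `flatMap` whose pieces sum back to their seeds. -/
lemma flatMap_sum_aux (f : ℝ → List ℝ) (hf : ∀ x, (f x).sum = x) :
    ∀ l : List ℝ, (l.flatMap f).sum = l.sum := by
  intro l
  induction l with
  | nil => simp
  | cons a l ih => simp [List.flatMap_cons, List.sum_append, ih, hf]

/-- All entries of `LSpart` are positive. -/
lemma LSpart_pos {L S : ℕ} {β : ℝ} (hβ0 : 0 < β) :
    ∀ n, ∀ x ∈ LSpart L S β n, 0 < x := by
  intro n
  induction n with
  | zero => intro x hx; simp [LSpart] at hx; simp [hx]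
  | succ n ih =>
    intro x hx
    rw [LSpart, List.mem_flatMap] at hx
    obtain ⟨y, hy, hxy⟩ := hx
    split at hxy
    · rcases List.mem_append.1 hxy with h | h
      · rw [List.eq_of_mem_replicate h]; positivity
      · rw [List.eq_of_mem_replicate h]; positivity
    · rw [List.mem_singleton] at hxy
      exact hxy ▸ ih y hy

/-- `LSpart` sums to 1. -/
lemma LSpart_sum {L S : ℕ} {β : ℝ} (hβ : (L : ℝ) * β + (S : ℝ) * β ^ 2 = 1) :
    ∀ n, (LSpart L S β n).sum = 1 := by
  intro n
  induction n with
  | zero => simp [LSpart]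
  | succ n ih =>
    rw [LSpart, flatMap_sum_aux _ ?_, ih]
    intro x
    split
    · rename_i h
      rw [List.sum_append, List.sum_replicate, List.sum_replicate, nsmul_eq_mul,
        nsmul_eq_mul, h]
      linear_combination (β ^ n) * hβ
    · simp

/-- Self-similar structure: the part of `ρ^(p+k)` inside a long interval of `ρᵖ` is a
scaled copy of `ρᵏ`. -/
lemma LSpart_struct {L S : ℕ} {β : ℝ} (hβ0 : 0 < β)
    (hβ : (L : ℝ) * β + (S : ℝ) * β ^ 2 = 1)
    (p i : ℕ) (hi : i < (LSpart L S β p).length)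
    (hlong : (LSpart L S β p)[i] = β ^ p) :
    ∀ k, ∃ A B : List ℝ,
      LSpart L S β (p + k) = A ++ (LSpart L S β k).map (fun x => β ^ p * x) ++ B ∧
      A.sum = ((LSpart L S β p).take i).sum := by
  intro k
  induction k with
  | zero =>
    refine ⟨(LSpart L S β p).take i, (LSpart L S β p).drop (i + 1), ?_, rfl⟩
    have h0 : (LSpart L S β 0).map (fun x => β ^ p * x) = [β ^ p] := by
      simp [LSpart]
    rw [Nat.add_zero, h0]
    conv_lhs => rw [← List.take_append_drop i (LSpart L S β p)]
    rw [List.drop_eq_getElem_cons hi, hlong]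
    simp
  | succ k ih =>
    obtain ⟨A, B, hdec, hsum⟩ := ih
    classical
    set f : ℝ → List ℝ := fun x =>
      if x = β ^ (p + k) then
        List.replicate L (β ^ (p + k + 1)) ++ List.replicate S (β ^ (p + k + 2))
      else [x] with hf
    set f' : ℝ → List ℝ := fun x =>
      if x = β ^ k then
        List.replicate L (β ^ (k + 1)) ++ List.replicate S (β ^ (k + 2))
      else [x] with hf'
    have hfsum : ∀ x, (f x).sum = x := by
      intro x
      rw [hf]
      dsimp only
      split
      · rename_i h
        rw [List.sum_append, List.sum_replicate, List.sum_replicate, nsmul_eq_mul,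
          nsmul_eq_mul, h]
        linear_combination (β ^ (p + k)) * hβ
      · simp
    have hmid : ∀ x : ℝ, f (β ^ p * x) = (f' x).map (fun y => β ^ p * y) := by
      intro x
      by_cases hx : x = β ^ k
      · have h1 : β ^ p * x = β ^ (p + k) := by rw [hx, pow_add]
        rw [hf, hf']
        dsimp only
        rw [if_pos h1, if_pos hx]
        simp only [List.map_append, List.map_replicate]
        rw [show β ^ p * β ^ (k + 1) = β ^ (p + k + 1) by ring,
          show β ^ p * β ^ (k + 2) = β ^ (p + k + 2) by ring]
      · have h1 : β ^ p * x ≠ β ^ (p + k) := by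
          intro h
          apply hx
          have hp : (β : ℝ) ^ p ≠ 0 := by positivity
          rw [pow_add] at h
          exact mul_left_cancel₀ hp h
        rw [hf, hf']
        dsimp only
        rw [if_neg h1, if_neg hx]
        simp
    have hstep : LSpart L S β (p + k + 1) = (LSpart L S β (p + k)).flatMap f := rfl
    refine ⟨A.flatMap f, B.flatMap f, ?_, ?_⟩
    · rw [← Nat.add_assoc, hstep, hdec, List.flatMap_append, List.flatMap_append]
      congr 1
      congr 1
      rw [List.flatMap_map]
      have hk1 : LSpart L S β (k + 1) = (LSpart L S β k).flatMap f' := rfl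
      rw [hk1, List.map_flatMap]
      simp only [hmid]
    · rw [flatMap_sum_aux f hfsum, hsum]

/-- Counting prefix sums falling inside the window of a middle block. -/
lemma count_window (A M B l : List ℝ) (hl : l = A ++ M ++ B)
    (hpos : ∀ x ∈ l, 0 < x) (hM : 0 < M.sum) :
    {j : Fin l.length | (l.take j).sum ∈ Set.Ico A.sum (A.sum + M.sum)}.ncard
      = M.length := by
  subst hl
  have hposA : ∀ x ∈ A, 0 < x := fun x hx => hpos x (by simp [hx])
  have hposM : ∀ x ∈ M, 0 < x := fun x hx => hpos x (by simp [hx])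
  have hlen : (A ++ M ++ B).length = A.length + M.length + B.length := by simp; omega
  -- prefix sum facts
  have fact1 : ∀ j : ℕ, j < A.length → ((A ++ M ++ B).take j).sum < A.sum := by
    intro j hj
    rw [List.append_assoc, List.take_append_of_le_length hj.le]
    conv_rhs => rw [← List.take_append_drop j A]
    rw [List.sum_append]
    have hdne : A.drop j ≠ [] := by
      simp [List.drop_eq_nil_iff]
      omega
    have : 0 < (A.drop j).sum :=
      List.sum_pos _ (fun x hx => hposA x (List.mem_of_mem_drop hx)) hdne
    linarith
  have fact2 : ∀ r : ℕ, ((A ++ M ++ B).take (A.length + r)).sum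
      = A.sum + ((M ++ B).take r).sum := by
    intro r
    rw [List.append_assoc, List.take_length_add_append, List.sum_append]
  have fact3 : ∀ r : ℕ, r < M.length →
      0 ≤ ((M ++ B).take r).sum ∧ ((M ++ B).take r).sum < M.sum := by
    intro r hr
    rw [List.take_append_of_le_length hr.le]
    constructor
    · exact List.sum_nonneg fun x hx =>
        (hposM x (List.mem_of_mem_take hx)).le
    · conv_rhs => rw [← List.take_append_drop r M]
      rw [List.sum_append]
      have hdne : M.drop r ≠ [] := by
        simp [List.drop_eq_nil_iff]
        omega
      have : 0 < (M.drop r).sum :=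
        List.sum_pos _ (fun x hx => hposM x (List.mem_of_mem_drop hx)) hdne
      linarith
  have fact4 : ∀ r : ℕ, M.length ≤ r → M.sum ≤ ((M ++ B).take r).sum := by
    intro r hr
    obtain ⟨s, rfl⟩ := Nat.exists_eq_add_of_le hr
    rw [List.take_length_add_append, List.sum_append]
    have : 0 ≤ (B.take s).sum := List.sum_nonneg fun x hx =>
      (hpos x (by simp [List.mem_of_mem_take hx])).le
    linarith
  have hset : {j : Fin (A ++ M ++ B).length |
      ((A ++ M ++ B).take j).sum ∈ Set.Ico A.sum (A.sum + M.sum)} =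
      {j : Fin (A ++ M ++ B).length |
        A.length ≤ (j : ℕ) ∧ (j : ℕ) < A.length + M.length} := by
    ext j
    simp only [Set.mem_setOf_eq, Set.mem_Ico]
    constructor
    · rintro ⟨h1, h2⟩
      have hja : A.length ≤ (j : ℕ) := by
        by_contra h
        push_neg at h
        exact absurd h1 (not_le.mpr (fact1 j h))
      refine ⟨hja, ?_⟩
      by_contra h
      push_neg at h
      obtain ⟨r, hr⟩ := Nat.exists_eq_add_of_le hja
      have hrM : M.length ≤ r := by omega
      have := fact4 r hrM
      rw [hr, fact2 r] at h2
      linarith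
    · rintro ⟨h1, h2⟩
      obtain ⟨r, hr⟩ := Nat.exists_eq_add_of_le h1
      have hrM : r < M.length := by omega
      obtain ⟨hr0, hr1⟩ := fact3 r hrM
      rw [hr, fact2 r]
      constructor <;> linarith
  rw [hset]
  have himg : Fin.val '' {j : Fin (A ++ M ++ B).length |
      A.length ≤ (j : ℕ) ∧ (j : ℕ) < A.length + M.length} =
      Set.Ico A.length (A.length + M.length) := by
    ext m
    simp only [Set.mem_image, Set.mem_setOf_eq, Set.mem_Ico]
    constructor
    · rintro ⟨j, ⟨h1, h2⟩, rfl⟩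
      exact ⟨h1, h2⟩
    · rintro ⟨h1, h2⟩
      exact ⟨⟨m, by omega⟩, ⟨h1, h2⟩, rfl⟩
  rw [← Set.ncard_image_of_injective _ Fin.val_injective, himg,
    ← Finset.coe_Ico, Set.ncard_coe_finset, Nat.card_Ico]
  omega

/-- For all `n ≥ p ≥ 0` and every long interval `Lₚ` of `ρᵖ` (an interval of length
`βᵖ`), the number of left endpoints `yⱼⁿ` of `ρⁿ` lying in `Lₚ` equals `tₙ₋ₚ`. -/
theorem count_in_long_interval (L S : ℕ) (hL : 0 < L) (hS : 0 < S) (β : ℝ)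
    (hβ0 : 0 < β) (hβ1 : β < 1) (hβ : (L : ℝ) * β + (S : ℝ) * β ^ 2 = 1) :
    ∀ p n : ℕ, p ≤ n → ∀ i : Fin (LSpart L S β p).length,
      (LSpart L S β p).get i = β ^ p →
      ({j : Fin (LSpart L S β n).length |
          lep L S β n j ∈ Set.Ico (lep L S β p i) (lep L S β p i + β ^ p)}).ncard =
        (LSpart L S β (n - p)).length := by
  intro p n hpn i hi
  have hnk : p + (n - p) = n := Nat.add_sub_cancel' hpn
  have hlong : (LSpart L S β p)[(i : ℕ)] = β ^ p := by
    rw [← List.get_eq_getElem]; exact hi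
  obtain ⟨A, B, hdec, hsum⟩ :=
    LSpart_struct hβ0 hβ p i i.isLt hlong (n - p)
  rw [hnk] at hdec
  set M : List ℝ := (LSpart L S β (n - p)).map (fun x => β ^ p * x) with hMdef
  have hMsum : M.sum = β ^ p := by
    have : ∀ l : List ℝ, (l.map (fun x => β ^ p * x)).sum = β ^ p * l.sum := by
      intro l
      induction l with
      | nil => simp
      | cons a l ih => simp [ih]; ring
    rw [hMdef, this, LSpart_sum hβ, mul_one]
  have hMpos : 0 < M.sum := by rw [hMsum]; positivity
  have hcount := count_window A M B (LSpart L S β n) hdec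
    (LSpart_pos hβ0 n) hMpos
  rw [hsum, hMsum, hMdef, List.length_map] at hcount
  simp only [lep]
  exact hcount
end

section
/- Fix positive integers L and S, let β ∈ (0,1) satisfy Lβ + Sβ² = 1, and let {ρⁿ} be the LS-sequence of partitions of [0,1), with left endpoints y₁ⁿ, …, y_{tₙ}ⁿ. Set B = (Sβ − Sβ²)/(1 + Sβ²). Then for all integers n ≥ p ≥ 0 and every long interval Lₚ of ρₚ (an interval of length βᵖ): (1/tₙ)·#{j : yⱼⁿ ∈ Lₚ} − βᵖ = −(B/tₙ)(−Sβ)ⁿ[(−Sβ)⁻ᵖ − βᵖ]; and for all n ≥ p + 1 and every short interval Sₚ of ρₚ (an interval of length βᵖ⁺¹): (1/tₙ)·#{j : yⱼⁿ ∈ Sₚ} − βᵖ⁺¹ = −(B/tₙ)(−Sβ)ⁿ[(−Sβ)⁻ᵖ⁻¹ − βᵖ⁺¹]. -/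
namespace LSaux

open Classical in
noncomputable def step (L S : ℕ) (β : ℝ) (m : ℕ) (x : ℝ) : List ℝ :=
  if x = β ^ m then List.replicate L (β ^ (m + 1)) ++ List.replicate S (β ^ (m + 2)) else [x]

noncomputable def rfn (L S : ℕ) (β : ℝ) (p : ℕ) : ℕ → ℝ → List ℝ
  | 0, x => [x]
  | k + 1, x => (rfn L S β p k x).flatMap (step L S β (p + k))

lemma rfn_zero (L S : ℕ) (β : ℝ) (p : ℕ) (x : ℝ) : rfn L S β p 0 x = [x] := rfl

lemma rfn_succ (L S : ℕ) (β : ℝ) (p k : ℕ) (x : ℝ) :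
    rfn L S β p (k + 1) x = (rfn L S β p k x).flatMap (step L S β (p + k)) := rfl

def tseq (L S : ℕ) : ℕ → ℕ
  | 0 => 1
  | 1 => L + S
  | k + 2 => L * tseq L S (k + 1) + S * tseq L S k

variable {L S : ℕ} {β : ℝ}

lemma LSpart_succ (L S : ℕ) (β : ℝ) (n : ℕ) :
    LSpart L S β (n + 1) = (LSpart L S β n).flatMap (step L S β n) := rfl

lemma LSpart_flat (L S : ℕ) (β : ℝ) (p k : ℕ) :
    LSpart L S β (p + k) = (LSpart L S β p).flatMap (rfn L S β p k) := by
  induction k with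
  | zero =>
      have h0 : rfn L S β p 0 = fun y => [y] := funext (rfn_zero L S β p)
      rw [Nat.add_zero, h0, List.flatMap_singleton']

  | succ k ih =>
      rw [show p + (k + 1) = (p + k) + 1 from rfl, LSpart_succ, ih, List.flatMap_assoc]
      rfl

lemma sum_flatMap (l : List ℝ) (f : ℝ → List ℝ) :
    (l.flatMap f).sum = (l.map (fun x => (f x).sum)).sum := by
  induction l with
  | nil => simp
  | cons a l ih => simp [List.flatMap_cons, ih]

lemma length_flatMap' (l : List ℝ) (f : ℝ → List ℝ) :
    (l.flatMap f).length = (l.map (fun x => (f x).length)).sum := by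
  simp [List.length_flatMap]

lemma step_sum (hβ : (L : ℝ) * β + (S : ℝ) * β ^ 2 = 1) (m : ℕ) (x : ℝ) :
    (step L S β m x).sum = x := by
  unfold step
  split
  · next h =>
      subst h
      simp only [List.sum_append, List.sum_replicate, nsmul_eq_mul]
      have : (L : ℝ) * β ^ (m + 1) + (S : ℝ) * β ^ (m + 2)
          = β ^ m * ((L : ℝ) * β + (S : ℝ) * β ^ 2) := by ring
      rw [this, hβ, mul_one]
  · simp

lemma rfn_sum (hβ : (L : ℝ) * β + (S : ℝ) * β ^ 2 = 1) (p k : ℕ) (x : ℝ) :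
    (rfn L S β p k x).sum = x := by
  induction k with
  | zero => simp [rfn_zero]
  | succ k ih =>
      rw [rfn_succ, sum_flatMap]
      have : (rfn L S β p k x).map (fun y => (step L S β (p + k) y).sum)
          = (rfn L S β p k x).map id := by
        apply List.map_congr_left
        intro y _
        exact step_sum hβ (p + k) y
      rw [this, List.map_id, ih]

lemma mem_LSpart (hβ0 : 0 < β) (hβ1 : β < 1) (n : ℕ) :
    ∀ x ∈ LSpart L S β n, x = β ^ n ∨ x = β ^ (n + 1) := by
  induction n with
  | zero => intro x hx; simp [LSpart] at hx; left; simp [hx]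
  | succ n ih =>
      intro x hx
      rw [LSpart_succ] at hx
      rw [List.mem_flatMap] at hx
      obtain ⟨y, hy, hx⟩ := hx
      unfold step at hx
      rcases ih y hy with h | h
      · rw [if_pos h] at hx
        simp only [List.mem_append, List.mem_replicate] at hx
        rcases hx with ⟨_, h⟩ | ⟨_, h⟩
        · left; exact h
        · right; exact h
      · have hne : y ≠ β ^ n := by
          rw [h]
          intro hc
          have := pow_lt_pow_right_of_lt_one₀ hβ0 hβ1 (Nat.lt_succ_self n)
          rw [Nat.succ_eq_add_one] at this
          linarith
        rw [if_neg hne] at hx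
        simp at hx
        left; rw [hx, h]

lemma pos_mem_LSpart (hβ0 : 0 < β) (hβ1 : β < 1) (n : ℕ) :
    ∀ x ∈ LSpart L S β n, 0 < x := by
  intro x hx
  rcases mem_LSpart hβ0 hβ1 n x hx with h | h <;> rw [h] <;> positivity

lemma rfn_shift (p k : ℕ) (x : ℝ) :
    rfn L S β p (k + 1) x = (step L S β p x).flatMap (rfn L S β (p + 1) k) := by
  induction k with
  | zero =>
      rw [rfn_succ]
      have : rfn L S β (p + 1) 0 = fun y => [y] := funext (rfn_zero L S β (p + 1))
      rw [this, List.flatMap_singleton']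
      simp [rfn_zero, List.flatMap_singleton]
  | succ k ih =>
      rw [rfn_succ, ih, List.flatMap_assoc]
      congr 1
      funext y
      rw [rfn_succ, show p + 1 + k = p + (k + 1) by omega]

lemma tseq_pos (hL : 0 < L) (hS : 0 < S) (k : ℕ) : 0 < tseq L S k := by
  induction k using Nat.twoStepInduction with
  | zero => simp [tseq]
  | one => simp [tseq]; omega
  | more k ih1 ih2 => rw [tseq]; positivity

lemma tseq_rec (k : ℕ) : tseq L S (k + 1) = L * tseq L S k + S * tseq L S (k - 1) := by
  cases k with
  | zero => simp [tseq]
  | succ k => rfl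

lemma step_long (p : ℕ) :
    step L S β p (β ^ p) = List.replicate L (β ^ (p + 1)) ++ List.replicate S (β ^ (p + 2)) := by
  simp [step]

lemma step_short (hβ0 : 0 < β) (hβ1 : β < 1) (p : ℕ) :
    step L S β p (β ^ (p + 1)) = [β ^ (p + 1)] := by
  unfold step
  rw [if_neg]
  intro hc
  have := pow_lt_pow_right_of_lt_one₀ hβ0 hβ1 (Nat.lt_succ_self p)
  rw [Nat.succ_eq_add_one] at this
  linarith

lemma rfn_len (hβ0 : 0 < β) (hβ1 : β < 1) (k : ℕ) : ∀ p : ℕ,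
    (rfn L S β p k (β ^ p)).length = tseq L S k ∧
    (rfn L S β p k (β ^ (p + 1))).length = tseq L S (k - 1) := by
  induction k with
  | zero => intro p; simp [rfn_zero, tseq]
  | succ k ih =>
      intro p
      constructor
      · rw [rfn_shift, step_long, length_flatMap']
        have hshort : (rfn L S β (p + 1) k (β ^ (p + 1 + 1))).length = tseq L S (k - 1) :=
          (ih (p + 1)).2
        have hlong : (rfn L S β (p + 1) k (β ^ (p + 1))).length = tseq L S k := (ih (p + 1)).1
        rw [List.map_append, List.map_replicate, List.map_replicate, List.sum_append,
          List.sum_replicate, List.sum_replicate]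
        rw [show p + 2 = p + 1 + 1 from rfl, hshort, hlong, tseq_rec, smul_eq_mul, smul_eq_mul]
      · rw [rfn_shift, step_short hβ0 hβ1]
        rw [List.flatMap_cons, List.flatMap_nil, List.append_nil]
        cases k with
        | zero => simp [rfn_zero, tseq]
        | succ k =>
            have := (ih (p + 1)).1
            simpa using this

/-- Polynomial closed form for `tseq`. -/
lemma cf (hβ : (L : ℝ) * β + (S : ℝ) * β ^ 2 = 1) (k : ℕ) :
    (tseq L S k : ℝ) * β ^ k * (1 + (S : ℝ) * β ^ 2)
      = (1 + (S : ℝ) * β) - ((S : ℝ) * β - (S : ℝ) * β ^ 2) * (-((S : ℝ) * β) * β) ^ k := by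
  induction k using Nat.twoStepInduction with
  | zero => simp [tseq]; ring
  | one =>
      show ((L + S : ℕ) : ℝ) * β ^ 1 * _ = _
      push_cast
      linear_combination (1 + (S : ℝ) * β ^ 2) * hβ
  | more k ih1 ih2 =>
      rw [tseq]
      push_cast
      linear_combination ((L : ℝ) * β) * ih2 + ((S : ℝ) * β ^ 2) * ih1 +
        ((1 + (S : ℝ) * β) + ((S : ℝ) * β - (S : ℝ) * β ^ 2) * (-((S : ℝ) * β) * β) ^ k
          * (S : ℝ) * β ^ 2) * hβ

lemma star (hβ : (L : ℝ) * β + (S : ℝ) * β ^ 2 = 1) (p k : ℕ) :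
    ((tseq L S k : ℝ) - β ^ p * (tseq L S (p + k) : ℝ)) * ((1 + (S : ℝ) * β ^ 2) * β ^ k)
      = -((S : ℝ) * β - (S : ℝ) * β ^ 2)
        * ((-((S : ℝ) * β) * β) ^ k - (-((S : ℝ) * β) * β) ^ (p + k)) := by
  have h1 := cf (L := L) (S := S) (β := β) hβ k
  have h2 := cf (L := L) (S := S) (β := β) hβ (p + k)
  linear_combination h1 - h2

section counting

lemma sum_take_lt (l : List ℝ) (h : ∀ x ∈ l, 0 < x) {j : ℕ} (hj : j < l.length) :
    (l.take j).sum < l.sum := by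
  conv_rhs => rw [← List.take_append_drop j l]
  rw [List.sum_append]
  have hne : l.drop j ≠ [] := by rw [Ne, List.drop_eq_nil_iff]; omega
  have : 0 < (l.drop j).sum := List.sum_pos _ (fun x hx => h x (List.drop_subset _ _ hx)) hne
  linarith

lemma sum_take_nonneg (l : List ℝ) (h : ∀ x ∈ l, 0 < x) (j : ℕ) : 0 ≤ (l.take j).sum :=
  List.sum_nonneg (fun x hx => le_of_lt (h x (List.take_subset _ _ hx)))

lemma count_middle (A B C : List ℝ) (hpos : ∀ x ∈ A ++ (B ++ C), 0 < x) :
    {j : Fin (A ++ (B ++ C)).length |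
      ((A ++ (B ++ C)).take (j : ℕ)).sum ∈ Set.Ico A.sum (A.sum + B.sum)}.ncard = B.length := by
  have hA : ∀ x ∈ A, 0 < x := fun x hx => hpos x (by simp [hx])
  have hB : ∀ x ∈ B, 0 < x := fun x hx => hpos x (by simp [hx])
  have hC : ∀ x ∈ C, 0 < x := fun x hx => hpos x (by simp [hx])
  have hlen : (A ++ (B ++ C)).length = A.length + (B.length + C.length) := by simp
  have hdecomp : ∀ m : ℕ, ((A ++ (B ++ C)).take m).sum
      = (A.take m).sum + ((B.take (m - A.length)).sum + (C.take (m - A.length - B.length)).sum) := by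
    intro m
    rw [List.take_append, List.take_append,
      List.sum_append, List.sum_append]
  have char : ∀ m : ℕ, m < (A ++ (B ++ C)).length →
      (((A ++ (B ++ C)).take m).sum ∈ Set.Ico A.sum (A.sum + B.sum)
        ↔ A.length ≤ m ∧ m < A.length + B.length) := by
    intro m hm
    rw [hdecomp m, Set.mem_Ico]
    rcases Nat.lt_or_ge m A.length with h1 | h1
    · have hz : m - A.length = 0 := by omega
      rw [hz]
      simp only [Nat.zero_sub, List.take_zero, List.sum_nil, add_zero]
      have hlt := sum_take_lt A hA h1
      constructor
      · rintro ⟨hle, -⟩; exact absurd hle (not_le.mpr hlt)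
      · rintro ⟨hle, -⟩; omega
    · have hAm : A.take m = A := List.take_of_length_le h1
      rw [hAm]
      rcases Nat.lt_or_ge m (A.length + B.length) with h2 | h2
      · have hz2 : m - A.length - B.length = 0 := by omega
        rw [hz2]
        simp only [List.take_zero, List.sum_nil, add_zero]
        have hlt : (B.take (m - A.length)).sum < B.sum := sum_take_lt B hB (by omega)
        have hge : 0 ≤ (B.take (m - A.length)).sum := sum_take_nonneg B hB _
        constructor
        · intro _; exact ⟨h1, h2⟩
        · intro _; constructor <;> linarith
      · have hBm : B.take (m - A.length) = B := List.take_of_length_le (by omega)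
        rw [hBm]
        have hge : 0 ≤ (C.take (m - A.length - B.length)).sum := sum_take_nonneg C hC _
        constructor
        · intro ⟨_, hlt⟩; exfalso; linarith
        · intro ⟨_, h⟩; omega
  have himg : Fin.val '' {j : Fin (A ++ (B ++ C)).length |
      ((A ++ (B ++ C)).take (j : ℕ)).sum ∈ Set.Ico A.sum (A.sum + B.sum)}
      = Set.Ico A.length (A.length + B.length) := by
    ext m
    simp only [Set.mem_image, Set.mem_setOf_eq, Set.mem_Ico]
    constructor
    · rintro ⟨j, hj, rfl⟩
      exact (char j j.isLt).1 hj
    · intro hm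
      have hmN : m < (A ++ (B ++ C)).length := by rw [hlen]; omega
      exact ⟨⟨m, hmN⟩, (char m hmN).2 hm, rfl⟩
  have := Set.ncard_image_of_injective {j : Fin (A ++ (B ++ C)).length |
      ((A ++ (B ++ C)).take (j : ℕ)).sum ∈ Set.Ico A.sum (A.sum + B.sum)} Fin.val_injective
  rw [← this, himg, ← Finset.coe_Ico, Set.ncard_coe_finset, Nat.card_Ico]
  omega

end counting

lemma main_count (hβ0 : 0 < β) (hβ1 : β < 1) (hβ : (L : ℝ) * β + (S : ℝ) * β ^ 2 = 1)
    (p k : ℕ) (i : Fin (LSpart L S β p).length) :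
    {j : Fin (LSpart L S β (p + k)).length |
        lep L S β (p + k) j ∈ Set.Ico (lep L S β p i)
          (lep L S β p i + (LSpart L S β p).get i)}.ncard
      = (rfn L S β p k ((LSpart L S β p).get i)).length := by
  classical
  have hsplit : LSpart L S β (p + k)
      = ((LSpart L S β p).take (i : ℕ)).flatMap (rfn L S β p k)
        ++ (rfn L S β p k ((LSpart L S β p).get i)
          ++ ((LSpart L S β p).drop ((i : ℕ) + 1)).flatMap (rfn L S β p k)) := by
    rw [LSpart_flat]
    conv_lhs => rw [← List.take_append_drop (i : ℕ) (LSpart L S β p)]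
    rw [List.flatMap_append, List.drop_eq_getElem_cons i.isLt, List.flatMap_cons,
      List.get_eq_getElem]
  set A := ((LSpart L S β p).take (i : ℕ)).flatMap (rfn L S β p k) with hA
  set B := rfn L S β p k ((LSpart L S β p).get i) with hB
  set C := ((LSpart L S β p).drop ((i : ℕ) + 1)).flatMap (rfn L S β p k) with hC
  have hAsum : A.sum = ((LSpart L S β p).take (i : ℕ)).sum := by
    rw [hA, sum_flatMap]
    have : (((LSpart L S β p).take (i : ℕ)).map fun y => (rfn L S β p k y).sum)
        = ((LSpart L S β p).take (i : ℕ)).map id := by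
      apply List.map_congr_left
      intro y _
      exact rfn_sum hβ p k y
    rw [this, List.map_id]
  have hBsum : B.sum = (LSpart L S β p).get i := rfn_sum hβ p k _
  have hpos : ∀ y ∈ A ++ (B ++ C), 0 < y := by
    rw [← hsplit]
    exact pos_mem_LSpart hβ0 hβ1 (p + k)
  have hkey := count_middle A B C hpos
  rw [hAsum, hBsum] at hkey
  rw [show (rfn L S β p k ((LSpart L S β p).get i)).length = B.length from rfl, ← hkey]
  simp only [lep]
  rw [hsplit]

lemma LSpart_length (hβ0 : 0 < β) (hβ1 : β < 1) (n : ℕ) :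
    (LSpart L S β n).length = tseq L S n := by
  have h := LSpart_flat L S β 0 n
  rw [Nat.zero_add] at h
  rw [h]
  show ([(1 : ℝ)].flatMap (rfn L S β 0 n)).length = _
  rw [List.flatMap_cons, List.flatMap_nil, List.append_nil,
    show (1 : ℝ) = β ^ 0 by rw [pow_zero]]
  exact (rfn_len hβ0 hβ1 n 0).1

lemma delta_eq (hβ0 : 0 < β) (hβ : (L : ℝ) * β + (S : ℝ) * β ^ 2 = 1) (p k : ℕ) :
    ((tseq L S k : ℝ) - β ^ p * (tseq L S (p + k) : ℝ)) * (1 + (S : ℝ) * β ^ 2)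
      = -((S : ℝ) * β - (S : ℝ) * β ^ 2)
        * ((-((S : ℝ) * β)) ^ k - (-((S : ℝ) * β)) ^ (p + k) * β ^ p) := by
  apply mul_right_cancel₀ (pow_ne_zero k (ne_of_gt hβ0))
  linear_combination star hβ p k

lemma final_alg (hL : 0 < L) (hS : 0 < S) (hβ0 : 0 < β) (hβ1 : β < 1)
    (hβ : (L : ℝ) * β + (S : ℝ) * β ^ 2 = 1) (hS0 : (S : ℝ) * β ≠ 0) (q k : ℕ) :
    (tseq L S k : ℝ) / (tseq L S (q + k) : ℝ) - β ^ q
      = -((((S : ℝ) * β - (S : ℝ) * β ^ 2) / (1 + (S : ℝ) * β ^ 2)) / (tseq L S (q + k) : ℝ))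
        * (-((S : ℝ) * β)) ^ (q + k) * (((-((S : ℝ) * β)) ^ q)⁻¹ - β ^ q) := by
  have ht : ((tseq L S (q + k) : ℕ) : ℝ) ≠ 0 :=
    Nat.cast_ne_zero.mpr (tseq_pos hL hS (q + k)).ne'
  have hw : (-((S : ℝ) * β)) ≠ 0 := neg_ne_zero.mpr hS0
  have hwp : ((-((S : ℝ) * β)) ^ q) ≠ 0 := pow_ne_zero _ hw
  have hd : (1 : ℝ) + (S : ℝ) * β ^ 2 ≠ 0 := by positivity
  have hΔ := delta_eq (L := L) (S := S) hβ0 hβ q k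
  have h2 : (-((S : ℝ) * β)) ^ (q + k) * (((-((S : ℝ) * β)) ^ q)⁻¹ - β ^ q)
      = (-((S : ℝ) * β)) ^ k - (-((S : ℝ) * β)) ^ (q + k) * β ^ q := by
    rw [pow_add, mul_sub]
    rw [mul_comm ((-((S : ℝ) * β)) ^ q) ((-((S : ℝ) * β)) ^ k), mul_assoc,
      mul_inv_cancel₀ hwp, mul_one, ← pow_add]
  rw [mul_assoc, h2]
  rw [div_sub' ht]
  rw [div_eq_iff ht]
  field_simp
  linear_combination hΔ

end LSaux

open LSaux

/-- With `B = (Sβ − Sβ²)/(1 + Sβ²)`: for all `n ≥ p ≥ 0` and every long interval `Lₚ` of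
`ρᵖ` (length `βᵖ`),
`(1/tₙ)·#{j : yⱼⁿ ∈ Lₚ} − βᵖ = −(B/tₙ)(−Sβ)ⁿ[(−Sβ)⁻ᵖ − βᵖ]`;
and for all `n ≥ p + 1` and every short interval `Sₚ` of `ρᵖ` (length `βᵖ⁺¹`),
`(1/tₙ)·#{j : yⱼⁿ ∈ Sₚ} − βᵖ⁺¹ = −(B/tₙ)(−Sβ)ⁿ[(−Sβ)⁻ᵖ⁻¹ − βᵖ⁺¹]`. -/
theorem local_discrepancy_formula (L S : ℕ) (hL : 0 < L) (hS : 0 < S) (β : ℝ)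
    (hβ0 : 0 < β) (hβ1 : β < 1) (hβ : (L : ℝ) * β + (S : ℝ) * β ^ 2 = 1) :
    (∀ p n : ℕ, p ≤ n → ∀ i : Fin (LSpart L S β p).length,
      (LSpart L S β p).get i = β ^ p →
      (({j : Fin (LSpart L S β n).length |
            lep L S β n j ∈ Set.Ico (lep L S β p i) (lep L S β p i + β ^ p)}).ncard : ℝ) /
          ((LSpart L S β n).length : ℝ) - β ^ p =
        -((((S : ℝ) * β - (S : ℝ) * β ^ 2) / (1 + (S : ℝ) * β ^ 2)) /
            ((LSpart L S β n).length : ℝ)) *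
          (-((S : ℝ) * β)) ^ n * (((-((S : ℝ) * β)) ^ p)⁻¹ - β ^ p)) ∧
    (∀ p n : ℕ, p + 1 ≤ n → ∀ i : Fin (LSpart L S β p).length,
      (LSpart L S β p).get i = β ^ (p + 1) →
      (({j : Fin (LSpart L S β n).length |
            lep L S β n j ∈ Set.Ico (lep L S β p i) (lep L S β p i + β ^ (p + 1))}).ncard : ℝ) /
          ((LSpart L S β n).length : ℝ) - β ^ (p + 1) =
        -((((S : ℝ) * β - (S : ℝ) * β ^ 2) / (1 + (S : ℝ) * β ^ 2)) /
            ((LSpart L S β n).length : ℝ)) *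
          (-((S : ℝ) * β)) ^ n * (((-((S : ℝ) * β)) ^ (p + 1))⁻¹ - β ^ (p + 1))) := by
  have hS0 : (S : ℝ) * β ≠ 0 := by positivity
  constructor
  · intro p n hpn i hi
    obtain ⟨k, rfl⟩ : ∃ k, n = p + k := ⟨n - p, by omega⟩
    have hcount := main_count hβ0 hβ1 hβ p k i
    rw [hi] at hcount
    rw [hcount, (rfn_len hβ0 hβ1 k p).1, LSpart_length hβ0 hβ1 (p + k)]
    exact final_alg hL hS hβ0 hβ1 hβ hS0 p k
  · intro p n hpn i hi
    obtain ⟨k, rfl⟩ : ∃ k, n = p + (k + 1) := ⟨n - p - 1, by omega⟩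
    have hcount := main_count hβ0 hβ1 hβ p (k + 1) i
    rw [hi] at hcount
    rw [hcount, (rfn_len hβ0 hβ1 (k + 1) p).2, Nat.add_sub_cancel,
      LSpart_length hβ0 hβ1 (p + (k + 1))]
    have := final_alg hL hS hβ0 hβ1 hβ hS0 (p + 1) k
    rw [show (p + 1) + k = p + (k + 1) by omega] at this
    exact this
end

section
/- Fix positive integers L and S, let β ∈ (0,1) satisfy Lβ + Sβ² = 1, and let {ρⁿ} be the LS-sequence of partitions of [0,1), with left endpoints y₁ⁿ, …, y_{tₙ}ⁿ. For n ≥ 1, let b ∈ (0,1) and let [b₁, b₂) be the interval of ρⁿ⁻¹ containing b. Then (1/tₙ)·#{j : yⱼⁿ < b} − b ≤ (1/tₙ)·#{j : yⱼⁿ < b₁} − b₁ + (L + S)/tₙ, and (1/tₙ)·#{j : yⱼⁿ < b} − b ≥ (1/tₙ)·#{j : yⱼⁿ < b₂} − b₂ − (L + S)/tₙ. -/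
/-- Number of left endpoints of `ρⁿ` lying in `[0, b)`. -/
noncomputable def countBelow (L S : ℕ) (β : ℝ) (n : ℕ) (b : ℝ) : ℕ :=
  ({j : Fin (LSpart L S β n).length | lep L S β n j < b}).ncard

namespace LSaux

lemma take_sum_le {l : List ℝ} (h : ∀ x ∈ l, 0 ≤ x) {j k : ℕ} (hjk : j ≤ k) :
    (l.take j).sum ≤ (l.take k).sum := by
  have h1 : l.take j = (l.take k).take j := by rw [List.take_take, min_eq_left hjk]
  have h2 : 0 ≤ ((l.take k).drop j).sum :=
    List.sum_nonneg fun x hx => h x (List.mem_of_mem_take (List.mem_of_mem_drop hx))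
  calc (l.take j).sum = ((l.take k).take j).sum := by rw [h1]
    _ ≤ ((l.take k).take j).sum + ((l.take k).drop j).sum := by linarith
    _ = (l.take k).sum := by rw [← List.sum_append, List.take_append_drop]

lemma take_sum_lt {l : List ℝ} (h : ∀ x ∈ l, 0 < x) {j k : ℕ} (hjk : j < k)
    (hk : k ≤ l.length) : (l.take j).sum < (l.take k).sum := by
  have h1 : l.take j = (l.take k).take j := by rw [List.take_take, min_eq_left hjk.le]
  have hne : (l.take k).drop j ≠ [] := by
    rw [← List.length_pos_iff, List.length_drop, List.length_take]
    omega
  have h2 : 0 < ((l.take k).drop j).sum :=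
    List.sum_pos _ (fun x hx => h x (List.mem_of_mem_take (List.mem_of_mem_drop hx))) hne
  calc (l.take j).sum = ((l.take k).take j).sum := by rw [h1]
    _ < ((l.take k).take j).sum + ((l.take k).drop j).sum := by linarith
    _ = (l.take k).sum := by rw [← List.sum_append, List.take_append_drop]

lemma ncard_fin_lt {N c : ℕ} (hc : c ≤ N) : {j : Fin N | (j : ℕ) < c}.ncard = c := by
  have himg : {j : Fin N | (j : ℕ) < c} = Set.range (Fin.castLE hc) := by
    ext j
    constructor
    · intro hj; exact ⟨⟨j, hj⟩, Fin.ext rfl⟩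
    · rintro ⟨i, rfl⟩; exact i.isLt
  rw [himg, ← Set.image_univ, Set.ncard_image_of_injective _ (Fin.castLE_injective hc),
    Set.ncard_univ]
  simp

lemma count_ub {N c : ℕ} (P : Fin N → Prop) (hc : c ≤ N)
    (h : ∀ j : Fin N, P j → (j : ℕ) < c) : {j : Fin N | P j}.ncard ≤ c := by
  rw [← ncard_fin_lt hc]
  exact Set.ncard_le_ncard (fun j hj => h j hj) (Set.toFinite _)

lemma count_lb {N c : ℕ} (P : Fin N → Prop) (hc : c ≤ N)
    (h : ∀ j : Fin N, (j : ℕ) < c → P j) : c ≤ {j : Fin N | P j}.ncard := by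
  rw [← ncard_fin_lt hc]
  exact Set.ncard_le_ncard (fun j hj => h j hj) (Set.toFinite _)

lemma sum_flatMap_s10 (g : ℝ → List ℝ) (hg : ∀ x, (g x).sum = x) :
    ∀ l : List ℝ, (l.flatMap g).sum = l.sum := by
  intro l
  induction l with
  | nil => simp
  | cons a t ih => simp [List.flatMap_cons, List.sum_append, hg, ih]

lemma take_flatMap_prefix (g : ℝ → List ℝ) (l : List ℝ) (k : ℕ) :
    (l.flatMap g).take (((l.take k).flatMap g).length) = (l.take k).flatMap g := by
  have h : l.flatMap g = (l.take k).flatMap g ++ (l.drop k).flatMap g := by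
    conv_lhs => rw [← List.take_append_drop k l]
    exact List.flatMap_append ..
  rw [h]
  exact List.take_left ..

open Classical in
lemma LSpart_succ_s10 (L S : ℕ) (β : ℝ) (m : ℕ) :
    LSpart L S β (m + 1) = (LSpart L S β m).flatMap (fun x =>
      if x = β ^ m then
        List.replicate L (β ^ (m + 1)) ++ List.replicate S (β ^ (m + 2))
      else [x]) := rfl

lemma LSpart_pos (L S : ℕ) (β : ℝ) (hβ0 : 0 < β) :
    ∀ n, ∀ x ∈ LSpart L S β n, 0 < x := by
  intro n
  induction n with
  | zero =>
    intro x hx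
    simp only [LSpart, List.mem_singleton] at hx
    simp [hx]
  | succ k ih =>
    intro x hx
    rw [LSpart_succ_s10, List.mem_flatMap] at hx
    obtain ⟨y, hy, hxy⟩ := hx
    by_cases h : y = β ^ k
    · rw [if_pos h, List.mem_append] at hxy
      rcases hxy with h' | h' <;>
        · rw [List.eq_of_mem_replicate h'] ; positivity
    · rw [if_neg h, List.mem_singleton] at hxy
      exact hxy ▸ ih y hy

open Classical in
lemma f_sum (L S : ℕ) (β : ℝ) (hβ : (L : ℝ) * β + (S : ℝ) * β ^ 2 = 1) (m : ℕ) (x : ℝ) :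
    ((if x = β ^ m then
        List.replicate L (β ^ (m + 1)) ++ List.replicate S (β ^ (m + 2))
      else [x]) : List ℝ).sum = x := by
  by_cases h : x = β ^ m
  · rw [if_pos h, List.sum_append, List.sum_replicate, List.sum_replicate, h,
      nsmul_eq_mul, nsmul_eq_mul]
    have : (L : ℝ) * β ^ (m + 1) + (S : ℝ) * β ^ (m + 2) = β ^ m * ((L : ℝ) * β + S * β ^ 2) := by
      ring
    rw [this, hβ, mul_one]
  · rw [if_neg h, List.sum_singleton]

open Classical in
lemma f_len (L S : ℕ) (β : ℝ) (hL : 0 < L) (m : ℕ) (x : ℝ) :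
    1 ≤ ((if x = β ^ m then
        List.replicate L (β ^ (m + 1)) ++ List.replicate S (β ^ (m + 2))
      else [x]) : List ℝ).length ∧
    ((if x = β ^ m then
        List.replicate L (β ^ (m + 1)) ++ List.replicate S (β ^ (m + 2))
      else [x]) : List ℝ).length ≤ L + S := by
  by_cases h : x = β ^ m <;> simp [h] <;> omega

end LSaux

open LSaux in
/-- For `n ≥ 1`, `b ∈ (0,1)`, with `[b₁, b₂)` the interval of `ρⁿ⁻¹` containing `b`:
`(1/tₙ)·#{j : yⱼⁿ < b} − b ≤ (1/tₙ)·#{j : yⱼⁿ < b₁} − b₁ + (L + S)/tₙ` and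
`(1/tₙ)·#{j : yⱼⁿ < b} − b ≥ (1/tₙ)·#{j : yⱼⁿ < b₂} − b₂ − (L + S)/tₙ`. -/
theorem enclosing_interval_bounds (L S : ℕ) (hL : 0 < L) (hS : 0 < S) (β : ℝ)
    (hβ0 : 0 < β) (hβ1 : β < 1) (hβ : (L : ℝ) * β + (S : ℝ) * β ^ 2 = 1) :
    ∀ n : ℕ, 1 ≤ n → ∀ b : ℝ, 0 < b → b < 1 →
      ∀ i : Fin (LSpart L S β (n - 1)).length,
        lep L S β (n - 1) i ≤ b →
        b < lep L S β (n - 1) i + (LSpart L S β (n - 1)).get i →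
        ((countBelow L S β n b : ℝ) / ((LSpart L S β n).length : ℝ) - b ≤
            (countBelow L S β n (lep L S β (n - 1) i) : ℝ) /
              ((LSpart L S β n).length : ℝ) - lep L S β (n - 1) i +
              ((L : ℝ) + S) / ((LSpart L S β n).length : ℝ)) ∧
        ((countBelow L S β n
              (lep L S β (n - 1) i + (LSpart L S β (n - 1)).get i) : ℝ) /
              ((LSpart L S β n).length : ℝ) -
              (lep L S β (n - 1) i + (LSpart L S β (n - 1)).get i) -
              ((L : ℝ) + S) / ((LSpart L S β n).length : ℝ) ≤
            (countBelow L S β n b : ℝ) / ((LSpart L S β n).length : ℝ) - b) := by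
  intro n hn b hb0 hb1 i hbl0 hbr0
  obtain ⟨m, rfl⟩ : ∃ m, n = m + 1 := ⟨n - 1, by omega⟩
  classical
  set l : List ℝ := LSpart L S β m with hldef
  set f : ℝ → List ℝ := fun x =>
    if x = β ^ m then
      List.replicate L (β ^ (m + 1)) ++ List.replicate S (β ^ (m + 2))
    else [x] with hfdef
  -- restate the boundary hypotheses with `m` in place of `m + 1 - 1`
  have hi : (i : ℕ) < l.length := i.isLt
  have hbl : lep L S β m i ≤ b := hbl0
  have hbr : b < lep L S β m i + l.get ⟨i, hi⟩ := hbr0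
  have hP : LSpart L S β (m + 1) = l.flatMap f := LSpart_succ_s10 L S β m
  have hfs : ∀ x, (f x).sum = x := fun x => f_sum L S β hβ m x
  have hfl : ∀ x, 1 ≤ (f x).length ∧ (f x).length ≤ L + S := fun x => f_len L S β hL m x
  have hpos : ∀ x ∈ LSpart L S β (m + 1), 0 < x := LSpart_pos L S β hβ0 (m + 1)
  set J : ℕ := ((l.take (i : ℕ)).flatMap f).length with hJdef
  set K : ℕ := (f (l.get ⟨i, hi⟩)).length with hKdef
  have hK1 : 1 ≤ K := (hfl _).1
  have hKLS : K ≤ L + S := (hfl _).2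
  -- splitting of the list at the block corresponding to interval `i`
  have h_take1 : l.take ((i : ℕ) + 1) = l.take (i : ℕ) ++ [l.get ⟨i, hi⟩] := by
    rw [List.take_succ, List.getElem?_eq_getElem hi]
    rfl
  have h1 : (l.take ((i : ℕ) + 1)).flatMap f = (l.take (i : ℕ)).flatMap f ++ f (l.get ⟨i, hi⟩) := by
    rw [h_take1, List.flatMap_append]
    simp
  have hJ_take : (l.flatMap f).take J = (l.take (i : ℕ)).flatMap f :=
    take_flatMap_prefix f l (i : ℕ)
  have hJK_take : (l.flatMap f).take (J + K) = (l.take (i : ℕ)).flatMap f ++ f (l.get ⟨i, hi⟩) := by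
    have h2 := take_flatMap_prefix f l ((i : ℕ) + 1)
    rw [h1, List.length_append] at h2
    exact h2
  have hlepJ : lep L S β (m + 1) J = lep L S β m (i : ℕ) := by
    unfold lep
    rw [hP, hJ_take, sum_flatMap_s10 f hfs]
  have hlepJK : lep L S β (m + 1) (J + K) = lep L S β m (i : ℕ) + l.get ⟨i, hi⟩ := by
    unfold lep
    rw [hP, hJK_take, List.sum_append, sum_flatMap_s10 f hfs, hfs]
  have hJK_le : J + K ≤ (LSpart L S β (m + 1)).length := by
    have h4 : l.flatMap f = (l.take ((i : ℕ) + 1)).flatMap f ++ (l.drop ((i : ℕ) + 1)).flatMap f := by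
      conv_lhs => rw [← List.take_append_drop ((i : ℕ) + 1) l]
      exact List.flatMap_append ..
    rw [hP, h4, List.length_append, h1, List.length_append]
    exact Nat.le_add_right _ _
  have hJ_le : J ≤ (LSpart L S β (m + 1)).length := le_trans (Nat.le_add_right J K) hJK_le
  have ht : 0 < (LSpart L S β (m + 1)).length := by omega
  -- monotonicity of prefix sums
  have hmono : ∀ j k : ℕ, j ≤ k → lep L S β (m + 1) j ≤ lep L S β (m + 1) k :=
    fun j k h => take_sum_le (fun x hx => (hpos x hx).le) h
  have hstrict : ∀ j k : ℕ, j < k → k ≤ (LSpart L S β (m + 1)).length →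
      lep L S β (m + 1) j < lep L S β (m + 1) k :=
    fun j k h hk => take_sum_lt hpos h hk
  -- counting bounds
  have cb_ub : countBelow L S β (m + 1) b ≤ J + K := by
    unfold countBelow
    apply count_ub _ hJK_le
    intro j hj
    by_contra hc
    push_neg at hc
    have h5 := hmono (J + K) (j : ℕ) hc
    rw [hlepJK] at h5
    linarith
  have cB_ub : countBelow L S β (m + 1) (lep L S β m (i : ℕ) + l.get ⟨i, hi⟩) ≤ J + K := by
    unfold countBelow
    apply count_ub _ hJK_le
    intro j hj
    by_contra hc
    push_neg at hc
    have h5 := hmono (J + K) (j : ℕ) hc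
    rw [hlepJK] at h5
    linarith
  have cb_lb : J ≤ countBelow L S β (m + 1) b := by
    unfold countBelow
    apply count_lb _ hJ_le
    intro j hj
    have h5 := hstrict (j : ℕ) J hj hJ_le
    rw [hlepJ] at h5
    calc lep L S β (m + 1) (j : ℕ) < lep L S β m (i : ℕ) := h5
      _ ≤ b := hbl
  have cA_lb : J ≤ countBelow L S β (m + 1) (lep L S β m (i : ℕ)) := by
    unfold countBelow
    apply count_lb _ hJ_le
    intro j hj
    have h5 := hstrict (j : ℕ) J hj hJ_le
    rw [hlepJ] at h5
    exact h5
  -- final arithmetic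
  have ht0 : (0 : ℝ) < ((LSpart L S β (m + 1)).length : ℝ) := by exact_mod_cast ht
  constructor
  · -- first inequality
    have hnat : countBelow L S β (m + 1) b ≤
        countBelow L S β (m + 1) (lep L S β m (i : ℕ)) + (L + S) := by omega
    have h6 : (countBelow L S β (m + 1) b : ℝ) ≤
        (countBelow L S β (m + 1) (lep L S β m (i : ℕ)) : ℝ) + ((L : ℝ) + S) := by
      exact_mod_cast hnat
    have h7 : (countBelow L S β (m + 1) b : ℝ) / ((LSpart L S β (m + 1)).length : ℝ) ≤
        ((countBelow L S β (m + 1) (lep L S β m (i : ℕ)) : ℝ) + ((L : ℝ) + S)) /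
          ((LSpart L S β (m + 1)).length : ℝ) := by gcongr
    rw [add_div] at h7
    have : (countBelow L S β (m + 1) b : ℝ) / ((LSpart L S β (m + 1)).length : ℝ) - b ≤
        (countBelow L S β (m + 1) (lep L S β m (i : ℕ)) : ℝ) /
          ((LSpart L S β (m + 1)).length : ℝ) - lep L S β m (i : ℕ) +
          ((L : ℝ) + S) / ((LSpart L S β (m + 1)).length : ℝ) := by linarith
    exact this
  · -- second inequality
    have hnat : countBelow L S β (m + 1) (lep L S β m (i : ℕ) + l.get ⟨i, hi⟩) ≤
        countBelow L S β (m + 1) b + (L + S) := by omega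
    have h6 : (countBelow L S β (m + 1) (lep L S β m (i : ℕ) + l.get ⟨i, hi⟩) : ℝ) ≤
        (countBelow L S β (m + 1) b : ℝ) + ((L : ℝ) + S) := by
      exact_mod_cast hnat
    have h7 : (countBelow L S β (m + 1) (lep L S β m (i : ℕ) + l.get ⟨i, hi⟩) : ℝ) /
        ((LSpart L S β (m + 1)).length : ℝ) ≤
        ((countBelow L S β (m + 1) b : ℝ) + ((L : ℝ) + S)) /
          ((LSpart L S β (m + 1)).length : ℝ) := by gcongr
    rw [add_div] at h7
    have : (countBelow L S β (m + 1) (lep L S β m (i : ℕ) + l.get ⟨i, hi⟩) : ℝ) /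
        ((LSpart L S β (m + 1)).length : ℝ) -
        (lep L S β m (i : ℕ) + l.get ⟨i, hi⟩) -
        ((L : ℝ) + S) / ((LSpart L S β (m + 1)).length : ℝ) ≤
        (countBelow L S β (m + 1) b : ℝ) / ((LSpart L S β (m + 1)).length : ℝ) - b := by
      linarith
    exact this
end

section
/- Fix positive integers L and S with S < L + 1, let β ∈ (0,1) satisfy Lβ + Sβ² = 1, and let {ρⁿ} be the LS-sequence of partitions of [0,1), with left endpoints y₁ⁿ, …, y_{tₙ}ⁿ. Then there exists a constant C₁ > 0, depending only on L and S, such that for all n ≥ 1, tₙ · sup_{0 < b ≤ 1} |(1/tₙ)·#{j : yⱼⁿ < b} − b| ≤ C₁; i.e. the star-discrepancy satisfies D*(ρⁿ) ≤ C₁/tₙ. -/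
/-- The star-discrepancy `D*(ρⁿ) = sup_{0 < b ≤ 1} |(1/tₙ) Σⱼ χ_{[0,b)}(yⱼⁿ) − b|`. -/
noncomputable def starDisc (L S : ℕ) (β : ℝ) (n : ℕ) : ℝ :=
  sSup {x : ℝ | ∃ b : ℝ, 0 < b ∧ b ≤ 1 ∧
    x = |(countBelow L S β n b : ℝ) / ((LSpart L S β n).length : ℝ) - b|}

namespace LSproof

open Classical in
/-- The level-`n` substitution map. -/
noncomputable def sub (L S : ℕ) (β : ℝ) (n : ℕ) : ℝ → List ℝ := fun x =>
  if x = β ^ n then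
    List.replicate L (β ^ (n + 1)) ++ List.replicate S (β ^ (n + 2))
  else [x]

lemma LSpart_succ (L S : ℕ) (β : ℝ) (n : ℕ) :
    LSpart L S β (n + 1) = (LSpart L S β n).flatMap (sub L S β n) := rfl

variable {L S : ℕ} {β : ℝ}

lemma pow_ne (hβ0 : 0 < β) (hβ1 : β < 1) {m k : ℕ} (h : m < k) : β ^ k ≠ β ^ m :=
  ne_of_lt (pow_lt_pow_right_of_lt_one₀ hβ0 hβ1 h)

/-- Every length in `ρⁿ` is `βⁿ` or `βⁿ⁺¹`. -/
lemma mem_LSpart : ∀ n, ∀ x ∈ LSpart L S β n, x = β ^ n ∨ x = β ^ (n + 1) := by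
  intro n
  induction n with
  | zero =>
    intro x hx
    simp only [LSpart, List.mem_singleton] at hx
    left; simp [hx]
  | succ n ih =>
    intro x hx
    rw [LSpart_succ, List.mem_flatMap] at hx
    obtain ⟨y, hy, hx⟩ := hx
    unfold sub at hx
    by_cases h : y = β ^ n
    · rw [if_pos h, List.mem_append] at hx
      rcases hx with h1 | h1
      · left; exact List.eq_of_mem_replicate h1
      · right
        have := List.eq_of_mem_replicate h1
        rw [this]
    · rw [if_neg h, List.mem_singleton] at hx
      rcases ih y hy with h1 | h1
      · exact absurd h1 h
      · left; rw [hx, h1]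

lemma sum_sub (hβ : (L : ℝ) * β + (S : ℝ) * β ^ 2 = 1) (n : ℕ) {x : ℝ}
    (hx : x = β ^ n ∨ x = β ^ (n + 1)) : (sub L S β n x).sum = x := by
  unfold sub
  by_cases h : x = β ^ n
  · rw [if_pos h, List.sum_append, List.sum_replicate, List.sum_replicate, h]
    have : (L : ℝ) * β ^ (n + 1) + (S : ℝ) * β ^ (n + 2) = β ^ n * ((L : ℝ) * β + S * β ^ 2) := by
      ring
    simp only [nsmul_eq_mul]
    rw [this, hβ, mul_one]
  · rw [if_neg h, List.sum_cons, List.sum_nil, add_zero]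

lemma sum_flatMap_eq {l : List ℝ} {f : ℝ → List ℝ} (h : ∀ x ∈ l, (f x).sum = x) :
    (l.flatMap f).sum = l.sum := by
  induction l with
  | nil => simp
  | cons a t ih =>
    rw [List.flatMap_cons, List.sum_append, List.sum_cons, h a (by simp),
      ih (fun x hx => h x (by simp [hx]))]

lemma sum_LSpart (hβ : (L : ℝ) * β + (S : ℝ) * β ^ 2 = 1) :
    ∀ n, (LSpart L S β n).sum = 1 := by
  intro n
  induction n with
  | zero => simp [LSpart]
  | succ n ih =>
    rw [LSpart_succ, sum_flatMap_eq (fun x hx => sum_sub hβ n (mem_LSpart n x hx)), ih]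

/-- The key linear functional on prefixes: `Sβ·(#long) − (#short)`. -/
noncomputable def Gf (S : ℕ) (β : ℝ) (n : ℕ) (u : List ℝ) : ℝ :=
  (S : ℝ) * β * (u.count (β ^ n) : ℝ) - (u.count (β ^ (n + 1)) : ℝ)

lemma Gf_append (n : ℕ) (u v : List ℝ) :
    Gf S β n (u ++ v) = Gf S β n u + Gf S β n v := by
  unfold Gf
  rw [List.count_append, List.count_append]
  push_cast
  ring

lemma Gf_sub (hβ0 : 0 < β) (hβ1 : β < 1) (hβ : (L : ℝ) * β + (S : ℝ) * β ^ 2 = 1)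
    (n : ℕ) {x : ℝ} (hx : x = β ^ n ∨ x = β ^ (n + 1)) :
    Gf S β (n + 1) (sub L S β n x) = -((S : ℝ) * β) * Gf S β n [x] := by
  have h21 : β ^ (n + 2) ≠ β ^ (n + 1) := pow_ne hβ0 hβ1 (by omega)
  have h10 : β ^ (n + 1) ≠ β ^ n := pow_ne hβ0 hβ1 (by omega)
  have h20 : β ^ (n + 2) ≠ β ^ n := pow_ne hβ0 hβ1 (by omega)
  unfold sub Gf
  by_cases h : x = β ^ n
  · rw [if_pos h]
    rw [List.count_append, List.count_append,
      List.count_replicate_self, List.count_replicate, List.count_replicate,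
      List.count_replicate_self]
    rw [if_neg (by simpa using h21), if_neg (by simpa using (Ne.symm h21))]
    rw [h, List.count_singleton, List.count_singleton]
    rw [if_pos (by simp), if_neg (by simpa using (Ne.symm h10))]
    push_cast
    linear_combination (S : ℝ) * hβ
  · rw [if_neg h]
    have hx1 : x = β ^ (n + 1) := hx.resolve_left h
    subst hx1
    have e : β ^ (n + 1 + 1) = β ^ (n + 2) := rfl
    rw [e]
    simp only [List.count_singleton]
    rw [if_pos (by simp), if_neg (by simpa using (Ne.symm h21)), if_neg (by simpa using h)]
    push_cast
    ring

lemma Gf_flatMap (hβ0 : 0 < β) (hβ1 : β < 1) (hβ : (L : ℝ) * β + (S : ℝ) * β ^ 2 = 1)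
    (n : ℕ) : ∀ v : List ℝ, (∀ x ∈ v, x = β ^ n ∨ x = β ^ (n + 1)) →
    Gf S β (n + 1) (v.flatMap (sub L S β n)) = -((S : ℝ) * β) * Gf S β n v := by
  intro v
  induction v with
  | nil => intro _; simp [Gf]
  | cons a t ih =>
    intro hmem
    rw [List.flatMap_cons, Gf_append, ih (fun x hx => hmem x (by simp [hx])),
      Gf_sub hβ0 hβ1 hβ n (hmem a (by simp))]
    have : (a :: t) = [a] ++ t := rfl
    rw [this, Gf_append]
    ring

lemma prefix_flatMap {α γ : Type*} {f : α → List γ} :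
    ∀ {l : List α} {u : List γ}, u <+: l.flatMap f →
      ∃ v w, v <+: l ∧ (w = [] ∨ ∃ e ∈ l, w <+: f e) ∧ u = v.flatMap f ++ w := by
  intro l
  induction l with
  | nil =>
    intro u hu
    refine ⟨[], [], List.prefix_refl _, Or.inl rfl, ?_⟩
    simpa using (List.prefix_nil.mp (by simpa using hu))
  | cons a t ih =>
    intro u hu
    rw [List.flatMap_cons] at hu
    obtain ⟨r, hr⟩ := hu
    rcases List.append_eq_append_iff.mp hr with ⟨a', ha1, _⟩ | ⟨c', hc1, hc2⟩
    · exact ⟨[], u, by simp, Or.inr ⟨a, by simp, ⟨a', ha1.symm⟩⟩, by simp⟩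
    · have hc : c' <+: t.flatMap f := ⟨r, hc2.symm⟩
      obtain ⟨v, w, hv, hw, hcw⟩ := ih hc
      refine ⟨a :: v, w, ?_, ?_, ?_⟩
      · obtain ⟨r', hr'⟩ := hv
        exact ⟨r', by simp [← hr']⟩
      · rcases hw with h | ⟨e, he, hwe⟩
        · exact Or.inl h
        · exact Or.inr ⟨e, by simp [he], hwe⟩
      · rw [List.flatMap_cons, hc1, hcw, List.append_assoc]

lemma count_len_sum (hβ0 : 0 < β) (hβ1 : β < 1) (n : ℕ) :
    ∀ u : List ℝ, (∀ x ∈ u, x = β ^ n ∨ x = β ^ (n + 1)) →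
      ((u.length : ℝ) = (u.count (β ^ n) : ℝ) + (u.count (β ^ (n + 1)) : ℝ) ∧
       u.sum = (u.count (β ^ n) : ℝ) * β ^ n + (u.count (β ^ (n + 1)) : ℝ) * β ^ (n + 1)) := by
  intro u
  induction u with
  | nil => simp
  | cons a t ih =>
    intro hm
    have h10 : β ^ (n + 1) ≠ β ^ n := pow_ne hβ0 hβ1 (by omega)
    obtain ⟨ih1, ih2⟩ := ih (fun x hx => hm x (by simp [hx]))
    rcases hm a (by simp) with ha | ha <;> subst ha
    · rw [List.count_cons_self, List.count_cons_of_ne (Ne.symm h10), List.length_cons, List.sum_cons]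
      push_cast
      constructor
      · rw [ih1]; ring
      · rw [ih2]; ring
    · rw [List.count_cons_self, List.count_cons_of_ne h10, List.length_cons,
        List.sum_cons]
      push_cast
      constructor
      · rw [ih1]; ring
      · rw [ih2]; ring

lemma Gf_sub_prefix_bound (hβ0 : 0 < β) (hβ1 : β < 1) (hL : 0 < L) (n : ℕ) {w : List ℝ} {e : ℝ}
    (he : e = β ^ n ∨ e = β ^ (n + 1)) (hw : w <+: sub L S β n e) :
    |Gf S β (n + 1) w| ≤ (S : ℝ) * β * L + S := by
  have h21 : β ^ (n + 2) ≠ β ^ (n + 1) := pow_ne hβ0 hβ1 (by omega)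
  have h10 : β ^ (n + 1) ≠ β ^ n := pow_ne hβ0 hβ1 (by omega)
  have hA : w.count (β ^ (n + 1)) ≤ L := by
    refine le_trans (hw.count_le _) ?_
    unfold sub
    by_cases h : e = β ^ n
    · rw [if_pos h, List.count_append, List.count_replicate_self, List.count_replicate,
        if_neg (by simpa using h21)]
      omega
    · rw [if_neg h, List.count_singleton]
      rcases he with he | he
      · exact absurd he h
      · subst he
        rw [if_pos (by simp)]
        omega
  have hB : w.count (β ^ (n + 1 + 1)) ≤ S := by
    have e2 : β ^ (n + 1 + 1) = β ^ (n + 2) := rfl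
    rw [e2]
    refine le_trans (hw.count_le _) ?_
    unfold sub
    by_cases h : e = β ^ n
    · rw [if_pos h, List.count_append, List.count_replicate, List.count_replicate_self,
        if_neg (by simpa using (Ne.symm h21))]
      omega
    · rw [if_neg h, List.count_singleton]
      rcases he with he | he
      · exact absurd he h
      · subst he
        rw [if_neg (by simpa using (Ne.symm h21))]
        omega
  have hA' : (w.count (β ^ (n + 1)) : ℝ) ≤ (L : ℝ) := by exact_mod_cast hA
  have hB' : (w.count (β ^ (n + 1 + 1)) : ℝ) ≤ (S : ℝ) := by exact_mod_cast hB
  have hA0 : (0 : ℝ) ≤ (w.count (β ^ (n + 1)) : ℝ) := by positivity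
  have hB0 : (0 : ℝ) ≤ (w.count (β ^ (n + 1 + 1)) : ℝ) := by positivity
  have hSβ0 : (0 : ℝ) ≤ (S : ℝ) * β := by positivity
  unfold Gf
  rw [abs_le]
  constructor <;> nlinarith

/-- The uniform bound on `G` over all prefixes of all `ρⁿ`. -/
lemma Gf_bound (hL : 0 < L) (hS : 0 < S) (hβ0 : 0 < β) (hβ1 : β < 1)
    (hβ : (L : ℝ) * β + (S : ℝ) * β ^ 2 = 1) (hSβ : (S : ℝ) * β < 1) :
    ∀ n, ∀ u, u <+: LSpart L S β n →
      |Gf S β n u| ≤ ((S : ℝ) * β * L + S) / (1 - (S : ℝ) * β) := by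
  have hden : (0 : ℝ) < 1 - (S : ℝ) * β := by linarith
  have hL1 : (1 : ℝ) ≤ (L : ℝ) := by exact_mod_cast hL
  have hS1 : (1 : ℝ) ≤ (S : ℝ) := by exact_mod_cast hS
  set K : ℝ := ((S : ℝ) * β * L + S) / (1 - (S : ℝ) * β) with hK
  have hKden : K * (1 - (S : ℝ) * β) = (S : ℝ) * β * L + S := by
    rw [hK, div_mul_cancel₀ _ (ne_of_gt hden)]
  have hK0 : 0 ≤ K := by positivity
  intro n
  induction n with
  | zero =>
    intro u hu
    have hu' : u = [] ∨ u = [1] := by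
      obtain ⟨r, hr⟩ := hu
      cases u with
      | nil => exact Or.inl rfl
      | cons a t =>
        right
        have h0 : LSpart L S β 0 = [1] := rfl
        rw [h0] at hr
        rw [List.cons_append, List.cons_eq_cons] at hr
        obtain ⟨ha, ht⟩ := hr
        rcases List.append_eq_nil_iff.mp ht with ⟨ht1, _⟩
        rw [ha, ht1]
    rcases hu' with h | h <;> subst h
    · simpa [Gf] using hK0
    · unfold Gf
      have hc0 : List.count (β ^ 0) [(1 : ℝ)] = 1 := by
        rw [List.count_singleton, if_pos (by simp)]
      have hβne : (1 : ℝ) ≠ β ^ (0 + 1) := by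
        simpa using (ne_of_lt hβ1).symm
      have hc1 : List.count (β ^ (0 + 1)) [(1 : ℝ)] = 0 := by
        rw [List.count_singleton, if_neg (by simpa using hβne)]
      rw [hc0, hc1]
      have : |(S : ℝ) * β * (1 : ℕ) - (0 : ℕ)| = (S : ℝ) * β := by
        push_cast
        rw [mul_one, sub_zero, abs_of_nonneg (by positivity)]
      rw [this]
      nlinarith [hKden, hden, hL1, hS1, hK0, hβ0.le,
        mul_nonneg (mul_nonneg (Nat.cast_nonneg S) hβ0.le) (sub_nonneg.mpr hβ1.le)]
  | succ n ih =>
    intro u hu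
    rw [LSpart_succ] at hu
    obtain ⟨v, w, hv, hw, rfl⟩ := prefix_flatMap hu
    have hmem : ∀ x ∈ v, x = β ^ n ∨ x = β ^ (n + 1) :=
      fun x hx => mem_LSpart n x (hv.sublist.subset hx)
    rw [Gf_append, Gf_flatMap hβ0 hβ1 hβ n v hmem]
    have h1 : |Gf S β n v| ≤ K := ih v hv
    have h2 : |Gf S β (n + 1) w| ≤ (S : ℝ) * β * L + S := by
      rcases hw with rfl | ⟨e, he, hwe⟩
      · have hz : Gf S β (n + 1) ([] : List ℝ) = 0 := by simp [Gf]
        rw [hz, abs_zero]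
        positivity
      · exact Gf_sub_prefix_bound hβ0 hβ1 hL n (mem_LSpart n e he) hwe
    calc |(-((S : ℝ) * β) * Gf S β n v) + Gf S β (n + 1) w|
        ≤ |(-((S : ℝ) * β) * Gf S β n v)| + |Gf S β (n + 1) w| := abs_add_le _ _
      _ = (S : ℝ) * β * |Gf S β n v| + |Gf S β (n + 1) w| := by
          rw [abs_mul, abs_neg, abs_of_nonneg (by positivity : (0:ℝ) ≤ (S:ℝ)*β)]
      _ ≤ (S : ℝ) * β * K + ((S : ℝ) * β * L + S) := by
          have := mul_le_mul_of_nonneg_left h1 (by positivity : (0:ℝ) ≤ (S:ℝ)*β)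
          linarith
      _ = K := by linarith [hKden]

/-- endpoints are in `[0,1]` and monotone. -/
lemma lep_nonneg (hβ0 : 0 < β) (hβ1 : β < 1) (n j : ℕ) : 0 ≤ lep L S β n j := by
  apply List.sum_nonneg
  intro x hx
  have hx' := mem_LSpart n x ((List.take_prefix j _).sublist.subset hx)
  rcases hx' with h | h <;> rw [h] <;> positivity

lemma lep_mono (hβ0 : 0 < β) (hβ1 : β < 1) (n : ℕ) {j j' : ℕ} (h : j' ≤ j) :
    lep L S β n j' ≤ lep L S β n j := by
  obtain ⟨d, rfl⟩ := Nat.exists_eq_add_of_le h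
  unfold lep
  rw [List.take_add, List.sum_append]
  have : 0 ≤ (List.take d (List.drop j' (LSpart L S β n))).sum := by
    apply List.sum_nonneg
    intro x hx
    have hx2 : x ∈ LSpart L S β n :=
      (List.drop_sublist _ _).subset ((List.take_prefix d _).sublist.subset hx)
    rcases mem_LSpart n x hx2 with h | h <;> rw [h] <;> positivity
  linarith

lemma lep_le_one (hβ0 : 0 < β) (hβ1 : β < 1)
    (hβ : (L : ℝ) * β + (S : ℝ) * β ^ 2 = 1) (n j : ℕ) : lep L S β n j ≤ 1 := by
  have h := sum_LSpart (L := L) (S := S) hβ n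
  have hsplit : lep L S β n j + (List.drop j (LSpart L S β n)).sum = 1 := by
    rw [← h]
    unfold lep
    rw [← List.sum_append, List.take_append_drop]
  have hd : 0 ≤ (List.drop j (LSpart L S β n)).sum := by
    apply List.sum_nonneg
    intro x hx
    have hx2 : x ∈ LSpart L S β n := (List.drop_sublist _ _).subset hx
    rcases mem_LSpart n x hx2 with h | h <;> rw [h] <;> positivity
  linarith

lemma lep_length (hβ : (L : ℝ) * β + (S : ℝ) * β ^ 2 = 1) (n : ℕ) :
    lep L S β n (LSpart L S β n).length = 1 := by
  unfold lep
  rw [List.take_length]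
  exact sum_LSpart hβ n

/-- The key estimate: `|tₙ · yⱼ − j| ≤ K₀` uniformly. -/
lemma key_est (hL : 0 < L) (hS : 0 < S) (hβ0 : 0 < β) (hβ1 : β < 1)
    (hβ : (L : ℝ) * β + (S : ℝ) * β ^ 2 = 1) (hSβ : (S : ℝ) * β < 1)
    (n j : ℕ) (hj : j ≤ (LSpart L S β n).length) :
    |((LSpart L S β n).length : ℝ) * lep L S β n j - j| ≤
      2 * ((1 - β) / (1 + (S : ℝ) * β ^ 2)) * (((S : ℝ) * β * L + S) / (1 - (S : ℝ) * β)) := by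
  set K : ℝ := ((S : ℝ) * β * L + S) / (1 - (S : ℝ) * β) with hKdef
  set c₂ : ℝ := (1 - β) / (1 + (S : ℝ) * β ^ 2) with hc₂
  set c₁ : ℝ := (1 + (S : ℝ) * β) / (1 + (S : ℝ) * β ^ 2) with hc₁
  have hdpos : (0 : ℝ) < 1 + (S : ℝ) * β ^ 2 := by positivity
  have hd : (1 + (S : ℝ) * β ^ 2) ≠ 0 := ne_of_gt hdpos
  have hc₂0 : 0 ≤ c₂ := by
    rw [hc₂]
    apply div_nonneg <;> nlinarith
  have hK0 : 0 ≤ K := by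
    rw [hKdef]
    apply div_nonneg <;> [positivity; linarith]
  have hPn : (0 : ℝ) < β ^ n := by positivity
  -- the exact identity for an arbitrary admissible prefix length
  have main : ∀ m : ℕ, m ≤ (LSpart L S β n).length →
      |c₁ / β ^ n * lep L S β n m - (m : ℝ)| ≤ c₂ * K := by
    intro m hm
    set u : List ℝ := (LSpart L S β n).take m with hu
    have hupre : u <+: LSpart L S β n := List.take_prefix _ _
    have hmem : ∀ x ∈ u, x = β ^ n ∨ x = β ^ (n + 1) :=
      fun x hx => mem_LSpart n x (hupre.sublist.subset hx)
    obtain ⟨hlen, hsum⟩ := count_len_sum hβ0 hβ1 n u hmem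
    have hulen : u.length = m := by
      rw [hu, List.length_take]
      omega
    set A : ℝ := (u.count (β ^ n) : ℝ)
    set B : ℝ := (u.count (β ^ (n + 1)) : ℝ)
    have hm' : (m : ℝ) = A + B := by rw [← hulen]; exact_mod_cast hlen
    have hlep : lep L S β n m = A * β ^ n + B * β ^ (n + 1) := hsum
    have hGf : |(S : ℝ) * β * A - B| ≤ K :=
      Gf_bound hL hS hβ0 hβ1 hβ hSβ n u hupre
    have hiden : c₁ / β ^ n * lep L S β n m - (m : ℝ) = c₂ * ((S : ℝ) * β * A - B) := by
      rw [hlep, hm', hc₁, hc₂, pow_succ]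
      field_simp
      ring
    rw [hiden, abs_mul, abs_of_nonneg hc₂0]
    exact mul_le_mul_of_nonneg_left hGf hc₂0
  have hfull := main (LSpart L S β n).length le_rfl
  rw [lep_length hβ, mul_one] at hfull
  have hthis := main j hj
  have hlep0 : 0 ≤ lep L S β n j := lep_nonneg hβ0 hβ1 n j
  have hlep1 : lep L S β n j ≤ 1 := lep_le_one hβ0 hβ1 hβ n j
  have hiden2 : ((LSpart L S β n).length : ℝ) * lep L S β n j - j =
      (((LSpart L S β n).length : ℝ) - c₁ / β ^ n) * lep L S β n j +
      (c₁ / β ^ n * lep L S β n j - j) := by ring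
  rw [hiden2]
  calc |(((LSpart L S β n).length : ℝ) - c₁ / β ^ n) * lep L S β n j +
      (c₁ / β ^ n * lep L S β n j - j)|
      ≤ |(((LSpart L S β n).length : ℝ) - c₁ / β ^ n) * lep L S β n j| +
        |c₁ / β ^ n * lep L S β n j - j| := abs_add_le _ _
    _ ≤ c₂ * K * 1 + c₂ * K := by
        have h1 : |(((LSpart L S β n).length : ℝ) - c₁ / β ^ n)| ≤ c₂ * K := by
          rw [abs_sub_comm]; exact hfull
        have h2 : |lep L S β n j| ≤ 1 := by rw [abs_of_nonneg hlep0]; exact hlep1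
        have hmm := mul_le_mul h1 h2 (abs_nonneg _) (by positivity)
        rw [abs_mul]
        exact add_le_add hmm hthis
      _ = 2 * c₂ * K := by ring

lemma ncard_fin_lt {t m : ℕ} (h : m ≤ t) : ({i : Fin t | (i : ℕ) < m}).ncard = m := by
  have himg : {i : Fin t | (i : ℕ) < m} = (Fin.castLE h) '' Set.univ := by
    ext i
    simp only [Set.mem_setOf_eq, Set.image_univ, Set.mem_range]
    constructor
    · intro hi
      exact ⟨⟨(i : ℕ), hi⟩, by ext; simp⟩
    · rintro ⟨x, rfl⟩
      simpa using x.isLt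
  rw [himg, Set.ncard_image_of_injective _ (Fin.castLE_injective h), Set.ncard_univ]
  simp

lemma mem_iff_lt_ncard {t : ℕ} {P : Fin t → Prop}
    (hdc : ∀ i j : Fin t, i ≤ j → P j → P i) (j : Fin t) :
    P j ↔ (j : ℕ) < {i : Fin t | P i}.ncard := by
  constructor
  · intro hj
    have hsub : {i : Fin t | (i : ℕ) < (j : ℕ) + 1} ⊆ {i : Fin t | P i} := by
      intro i hi
      exact hdc i j (Fin.le_def.mpr (Nat.lt_succ_iff.mp hi)) hj
    have hle := Set.ncard_le_ncard hsub (Set.toFinite _)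
    rw [ncard_fin_lt (by omega : (j : ℕ) + 1 ≤ t)] at hle
    omega
  · intro hj
    by_contra hP
    have hsub : {i : Fin t | P i} ⊆ {i : Fin t | (i : ℕ) < (j : ℕ)} := by
      intro i hi
      by_contra hij
      rw [Set.mem_setOf_eq, not_lt] at hij
      exact hP (hdc j i (Fin.le_def.mpr hij) hi)
    have hle := Set.ncard_le_ncard hsub (Set.toFinite _)
    rw [ncard_fin_lt (le_of_lt j.isLt)] at hle
    omega

lemma length_LSpart_pos (hβ : (L : ℝ) * β + (S : ℝ) * β ^ 2 = 1) (n : ℕ) :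
    0 < (LSpart L S β n).length := by
  rcases Nat.eq_zero_or_pos (LSpart L S β n).length with h0 | h
  · exfalso
    have hnil : LSpart L S β n = [] := List.length_eq_zero_iff.mp h0
    have := sum_LSpart (L := L) (S := S) hβ n
    rw [hnil] at this
    simp at this
  · exact h

end LSproof

/-- If `S < L + 1`, there is a constant `C₁ > 0`, depending only on `L` and `S`, with
`tₙ · D*(ρⁿ) ≤ C₁` for all `n ≥ 1`; i.e. `D*(ρⁿ) ≤ C₁/tₙ`. -/
theorem starDisc_le_of_S_lt (L S : ℕ) (hL : 0 < L) (hS : 0 < S) (hLS : S < L + 1)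
    (β : ℝ) (hβ0 : 0 < β) (hβ1 : β < 1)
    (hβ : (L : ℝ) * β + (S : ℝ) * β ^ 2 = 1) :
    ∃ C₁ : ℝ, 0 < C₁ ∧ ∀ n : ℕ, 1 ≤ n →
      ((LSpart L S β n).length : ℝ) * starDisc L S β n ≤ C₁ ∧
      starDisc L S β n ≤ C₁ / ((LSpart L S β n).length : ℝ) := by
  open LSproof in
  have hS0 : (0 : ℝ) < (S : ℝ) := by exact_mod_cast hS
  have hSL : (S : ℝ) ≤ (L : ℝ) := by exact_mod_cast Nat.lt_succ_iff.mp hLS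
  have hSβ : (S : ℝ) * β < 1 := by
    nlinarith [mul_nonneg (sub_nonneg.mpr hSL) hβ0.le, mul_pos hS0 (pow_pos hβ0 2)]
  set K0 : ℝ :=
    2 * ((1 - β) / (1 + (S : ℝ) * β ^ 2)) * (((S : ℝ) * β * L + S) / (1 - (S : ℝ) * β))
    with hK0def
  have hK00 : 0 ≤ K0 := by
    rw [hK0def]
    have h1 : (0:ℝ) ≤ (1 - β) / (1 + (S : ℝ) * β ^ 2) :=
      div_nonneg (by linarith) (by positivity)
    have h2 : (0:ℝ) ≤ ((S : ℝ) * β * L + S) / (1 - (S : ℝ) * β) :=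
      div_nonneg (by positivity) (by linarith)
    positivity
  refine ⟨K0 + 1, by linarith, ?_⟩
  intro n _
  have htpos : 0 < (LSpart L S β n).length := length_LSpart_pos hβ n
  have htpos' : (0 : ℝ) < ((LSpart L S β n).length : ℝ) := by exact_mod_cast htpos
  have hbound : ∀ x ∈ {x : ℝ | ∃ b : ℝ, 0 < b ∧ b ≤ 1 ∧
      x = |(countBelow L S β n b : ℝ) / ((LSpart L S β n).length : ℝ) - b|},
      x ≤ (K0 + 1) / ((LSpart L S β n).length : ℝ) := by
    rintro x ⟨b, hb0, hb1, rfl⟩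
    have hdc : ∀ i j : Fin (LSpart L S β n).length, i ≤ j →
        lep L S β n j < b → lep L S β n i < b := by
      intro i j hij hj
      exact lt_of_le_of_lt (lep_mono hβ0 hβ1 n (Fin.le_def.mp hij)) hj
    have hiff : ∀ j : Fin (LSpart L S β n).length,
        lep L S β n j < b ↔ (j : ℕ) < countBelow L S β n b :=
      fun j => mem_iff_lt_ncard hdc j
    have hk1 : 1 ≤ countBelow L S β n b := by
      have h0 : lep L S β n ((⟨0, htpos⟩ : Fin (LSpart L S β n).length) : ℕ) < b := by
        have hl0 : lep L S β n 0 = 0 := by simp [lep]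
        simpa [hl0] using hb0
      have := (hiff ⟨0, htpos⟩).mp h0
      omega
    have hkt : countBelow L S β n b ≤ (LSpart L S β n).length := by
      have h := Set.ncard_le_ncard
        (Set.subset_univ {j : Fin (LSpart L S β n).length | lep L S β n j < b})
        (Set.toFinite _)
      rw [Set.ncard_univ] at h
      simpa [countBelow] using h
    have hlow : lep L S β n (countBelow L S β n b - 1) < b := by
      have hklt : countBelow L S β n b - 1 < (LSpart L S β n).length := by omega
      have := (hiff ⟨countBelow L S β n b - 1, hklt⟩).mpr (by simp; omega)
      simpa using this
    have hhigh : b ≤ lep L S β n (countBelow L S β n b) := by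
      rcases Nat.lt_or_ge (countBelow L S β n b) (LSpart L S β n).length with hlt | hge
      · have hnot : ¬ lep L S β n ((⟨countBelow L S β n b, hlt⟩ :
            Fin (LSpart L S β n).length) : ℕ) < b := by
          rw [hiff]
          simp
        simpa using not_lt.mp hnot
      · have hkt' : countBelow L S β n b = (LSpart L S β n).length :=
          le_antisymm hkt hge
        rw [hkt', lep_length hβ]
        exact hb1
    have e1 := key_est hL hS hβ0 hβ1 hβ hSβ n (countBelow L S β n b) hkt
    have e2 := key_est hL hS hβ0 hβ1 hβ hSβ n (countBelow L S β n b - 1) (by omega)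
    rw [← hK0def] at e1 e2
    have hcast : ((countBelow L S β n b - 1 : ℕ) : ℝ) = (countBelow L S β n b : ℝ) - 1 := by
      have h1 : 1 ≤ countBelow L S β n b := hk1
      push_cast [h1]
      ring
    have habs : |(countBelow L S β n b : ℝ) - ((LSpart L S β n).length : ℝ) * b| ≤ K0 + 1 := by
      rw [abs_le] at e1 e2 ⊢
      constructor
      · have h1 : ((LSpart L S β n).length : ℝ) * b ≤
            ((LSpart L S β n).length : ℝ) * lep L S β n (countBelow L S β n b) :=
          mul_le_mul_of_nonneg_left hhigh htpos'.le
        nlinarith [e1.2]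
      · have h2 : ((LSpart L S β n).length : ℝ) * lep L S β n (countBelow L S β n b - 1) ≤
            ((LSpart L S β n).length : ℝ) * b :=
          mul_le_mul_of_nonneg_left hlow.le htpos'.le
        nlinarith [e2.1, hcast]
    have hre : |(countBelow L S β n b : ℝ) / ((LSpart L S β n).length : ℝ) - b| =
        |(countBelow L S β n b : ℝ) - ((LSpart L S β n).length : ℝ) * b| /
          ((LSpart L S β n).length : ℝ) := by
      rw [show (countBelow L S β n b : ℝ) / ((LSpart L S β n).length : ℝ) - b =
        ((countBelow L S β n b : ℝ) - ((LSpart L S β n).length : ℝ) * b) /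
          ((LSpart L S β n).length : ℝ) by field_simp, abs_div,
        abs_of_pos htpos']
    rw [hre]
    gcongr
  have hsup : starDisc L S β n ≤ (K0 + 1) / ((LSpart L S β n).length : ℝ) := by
    unfold starDisc
    exact Real.sSup_le hbound (div_nonneg (by linarith) htpos'.le)
  refine ⟨?_, hsup⟩
  calc ((LSpart L S β n).length : ℝ) * starDisc L S β n
      ≤ ((LSpart L S β n).length : ℝ) * ((K0 + 1) / ((LSpart L S β n).length : ℝ)) :=
        mul_le_mul_of_nonneg_left hsup htpos'.le
    _ = K0 + 1 := by field_simp
end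

section
/- Fix positive integers L and S with S = L + 1, let β ∈ (0,1) satisfy Lβ + Sβ² = 1, and let {ρⁿ} be the LS-sequence of partitions of [0,1), with left endpoints y₁ⁿ, …, y_{tₙ}ⁿ. Then there exists a constant C₂ > 0, depending only on L and S, such that for all n ≥ 2, (tₙ/log tₙ) · sup_{0 < b ≤ 1} |(1/tₙ)·#{j : yⱼⁿ < b} − b| ≤ C₂; i.e. the star-discrepancy satisfies D*(ρⁿ) ≤ C₂ (log tₙ)/tₙ. -/
namespace LSaux

def Wstep (L S n : ℕ) (l : List ℕ) : List ℕ :=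
  l.flatMap (fun k => if k = n then List.replicate L (n+1) ++ List.replicate S (n+2) else [k])

def Wseq (L S : ℕ) : ℕ → List ℕ
  | 0 => [0]
  | n+1 => Wstep L S n (Wseq L S n)

variable {L S : ℕ} {β : ℝ}

lemma pow_inj (hβ0 : 0 < β) (hβ1 : β < 1) {i j : ℕ} (h : β ^ i = β ^ j) : i = j := by
  by_contra hne
  rcases Nat.lt_or_ge i j with hij | hij
  · exact ((pow_lt_pow_right_of_lt_one₀ hβ0 hβ1 hij).ne' h).elim
  · exact ((pow_lt_pow_right_of_lt_one₀ hβ0 hβ1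
      (lt_of_le_of_ne hij (Ne.symm hne))).ne h).elim

lemma LSpart_eq (hβ0 : 0 < β) (hβ1 : β < 1) (n : ℕ) :
    LSpart L S β n = (Wseq L S n).map (β ^ ·) := by
  induction n with
  | zero => simp [LSpart, Wseq]
  | succ n ih =>
    show (LSpart L S β n).flatMap _ = _
    rw [ih, Wseq, Wstep, List.flatMap_map, List.map_flatMap]
    congr 1
    funext k
    by_cases hk : k = n
    · subst hk; simp
    · have : β ^ k ≠ β ^ n := fun h => hk (pow_inj hβ0 hβ1 h)
      simp [hk, this]

lemma flatMap_replicate {α β' : Type*} (m : ℕ) (a : α) (f : α → List β') :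
    (List.replicate m a).flatMap f = (List.replicate m (f a)).flatten := by
  induction m with
  | zero => simp
  | succ m ih => simp [List.replicate_succ, ih]

lemma Wstep_shift (n m : ℕ) (l : List ℕ) :
    Wstep L S (n+m) (l.map (· + m)) = (Wstep L S n l).map (· + m) := by
  unfold Wstep
  rw [List.flatMap_map, List.map_flatMap]
  congr 1
  funext k
  by_cases hk : k = n
  · subst hk
    have e1 : k + m + 1 = k + 1 + m := by omega
    have e2 : k + m + 2 = k + 2 + m := by omega
    simp [e1, e2]
  · have : k + m ≠ n + m := by omega
    simp [hk, this]

lemma Wstep_append (n : ℕ) (l₁ l₂ : List ℕ) :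
    Wstep L S n (l₁ ++ l₂) = Wstep L S n l₁ ++ Wstep L S n l₂ :=
  List.flatMap_append ..

lemma Wstep_flatten_replicate (n m : ℕ) (l : List ℕ) :
    Wstep L S n (List.replicate m l).flatten = (List.replicate m (Wstep L S n l)).flatten := by
  induction m with
  | zero => simp [Wstep]
  | succ m ih => simp [List.replicate_succ, Wstep_append, ih]

lemma selfSim (n : ℕ) :
    Wseq L S (n+2) = (List.replicate L ((Wseq L S (n+1)).map (· + 1))).flatten
      ++ (List.replicate S ((Wseq L S n).map (· + 2))).flatten := by
  induction n with
  | zero =>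
    show Wstep L S 1 (Wstep L S 0 [0]) = _
    have h0 : Wstep L S 0 [0] = List.replicate L 1 ++ List.replicate S 2 := by
      simp [Wstep]
    rw [h0, Wstep_append]
    unfold Wstep
    rw [flatMap_replicate, flatMap_replicate]
    simp [Wseq, Wstep]
  | succ n ih =>
    show Wstep L S (n+2) (Wseq L S (n+2)) = _
    conv_lhs => rw [ih]
    rw [Wstep_append, Wstep_flatten_replicate, Wstep_flatten_replicate]
    have h1 : Wstep L S (n+2) ((Wseq L S (n+1)).map (· + 1)) = (Wseq L S (n+2)).map (· + 1) := by
      have := Wstep_shift (L := L) (S := S) (n+1) 1 (Wseq L S (n+1))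
      simpa [Wseq] using this
    have h2 : Wstep L S (n+2) ((Wseq L S n).map (· + 2)) = (Wseq L S (n+1)).map (· + 2) := by
      have := Wstep_shift (L := L) (S := S) n 2 (Wseq L S n)
      simpa [Wseq] using this
    rw [h1, h2]

end LSaux

namespace Part2
open LSaux
variable {L S : ℕ} {β : ℝ}

lemma flatten_replicate_length {α : Type*} (m : ℕ) (l : List α) :
    (List.replicate m l).flatten.length = m * l.length := by
  induction m with
  | zero => simp
  | succ m ih => simp [List.replicate_succ, ih]; ring

lemma flatten_replicate_sum (m : ℕ) (l : List ℝ) :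
    (List.replicate m l).flatten.sum = m * l.sum := by
  induction m with
  | zero => simp
  | succ m ih => simp [List.replicate_succ, ih]; ring

lemma rho_decomp (hβ0 : 0 < β) (hβ1 : β < 1) (n : ℕ) :
    LSpart L S β (n+2) =
      (List.replicate L ((LSpart L S β (n+1)).map (fun x => β * x))).flatten
        ++ (List.replicate S ((LSpart L S β n).map (fun x => β^2 * x))).flatten := by
  rw [LSpart_eq hβ0 hβ1, LSpart_eq hβ0 hβ1 (n+1), LSpart_eq hβ0 hβ1 n, selfSim]
  rw [List.map_append]
  congr 1
  · rw [List.map_flatten, List.map_replicate, List.map_map, List.map_map]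
    congr 2
    apply List.map_congr_left
    intro k _
    show β ^ (k + 1) = β * β ^ k
    ring
  · rw [List.map_flatten, List.map_replicate, List.map_map, List.map_map]
    congr 2
    apply List.map_congr_left
    intro k _
    show β ^ (k + 2) = β ^ 2 * β ^ k
    ring

lemma rho_pos (hβ0 : 0 < β) (hβ1 : β < 1) (n : ℕ) :
    ∀ x ∈ LSpart L S β n, 0 < x := by
  rw [LSpart_eq hβ0 hβ1]
  intro x hx
  obtain ⟨k, _, rfl⟩ := List.mem_map.1 hx
  positivity

lemma rho_sum (hβ : (L : ℝ) * β + (S : ℝ) * β ^ 2 = 1) (n : ℕ) :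
    (LSpart L S β n).sum = 1 := by
  induction n with
  | zero => simp [LSpart]
  | succ n ih =>
    show ((LSpart L S β n).flatMap _).sum = 1
    rw [show ((LSpart L S β n).flatMap (fun x =>
        if x = β ^ n then List.replicate L (β ^ (n + 1)) ++ List.replicate S (β ^ (n + 2))
        else [x])) = (((LSpart L S β n).map (fun x =>
        if x = β ^ n then List.replicate L (β ^ (n + 1)) ++ List.replicate S (β ^ (n + 2))
        else [x])).flatten) from rfl]
    rw [List.sum_flatten, List.map_map]
    have hfun : (List.sum ∘ fun x : ℝ =>
        if x = β ^ n then List.replicate L (β ^ (n + 1)) ++ List.replicate S (β ^ (n + 2))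
        else [x]) = fun x => x := by
      funext x
      by_cases hx : x = β ^ n
      · subst hx
        show (if (β ^ n : ℝ) = β ^ n then List.replicate L (β ^ (n + 1))
            ++ List.replicate S (β ^ (n + 2)) else [β ^ n]).sum = β ^ n
        rw [if_pos rfl]
        simp only [List.sum_append, List.sum_replicate, nsmul_eq_mul]
        linear_combination (β ^ n) * hβ
      · show (if x = β ^ n then List.replicate L (β ^ (n + 1))
            ++ List.replicate S (β ^ (n + 2)) else [x]).sum = x
        rw [if_neg hx]
        simp
    rw [hfun]
    simpa using ih

lemma t_rec (hβ0 : 0 < β) (hβ1 : β < 1) (n : ℕ) :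
    (LSpart L S β (n+2)).length
      = L * (LSpart L S β (n+1)).length + S * (LSpart L S β n).length := by
  rw [rho_decomp hβ0 hβ1, List.length_append, flatten_replicate_length,
    flatten_replicate_length, List.length_map, List.length_map]

lemma t1_eq (hβ0 : 0 < β) (hβ1 : β < 1) : (LSpart L S β 1).length = L + S := by
  rw [LSpart_eq hβ0 hβ1]
  simp [Wseq, Wstep]

lemma t_ge (hβ0 : 0 < β) (hβ1 : β < 1) (hL : 0 < L) (hS : 2 ≤ S) :
    ∀ n, 2 ^ n ≤ (LSpart L S β n).length := by
  intro n
  induction n using Nat.strong_induction_on with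
  | _ n ih =>
    match n with
    | 0 => simp [LSpart]
    | 1 => rw [t1_eq hβ0 hβ1]; omega
    | (n+2) =>
      rw [t_rec hβ0 hβ1]
      have h1 := ih (n+1) (by omega)
      have h2 := ih n (by omega)
      have he : 2 ^ (n+2) = 2 ^ (n+1) + 2 * 2 ^ n := by ring
      have hA : 2 ^ (n+1) ≤ L * (LSpart L S β (n+1)).length :=
        le_trans h1 (Nat.le_mul_of_pos_left _ hL)
      have hB : 2 * 2 ^ n ≤ S * (LSpart L S β n).length := Nat.mul_le_mul hS h2
      omega

end Part2

namespace Part3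
open LSaux Part2
open Classical

noncomputable def Ncnt (l : List ℝ) (b : ℝ) : ℕ :=
  ((Finset.range l.length).filter (fun j => ((l.take j).sum < b))).card

lemma Ncnt_le (l : List ℝ) (b : ℝ) : Ncnt l b ≤ l.length := by
  calc Ncnt l b ≤ (Finset.range l.length).card := Finset.card_filter_le _ _
    _ = l.length := Finset.card_range _

lemma Ncnt_nil (b : ℝ) : Ncnt [] b = 0 := by
  simp [Ncnt]

lemma Ncnt_snoc (l : List ℝ) (x b : ℝ) :
    Ncnt (l ++ [x]) b = Ncnt l b + (if l.sum < b then 1 else 0) := by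
  unfold Ncnt
  have hlen : (l ++ [x]).length = l.length + 1 := by simp
  rw [hlen, Finset.range_add_one, Finset.filter_insert]
  have h1 : (l ++ [x]).take l.length = l := List.take_left (l₁ := l) (l₂ := [x])
  have h2 : Finset.filter (fun j => (((l ++ [x]).take j).sum < b)) (Finset.range l.length)
      = Finset.filter (fun j => ((l.take j).sum < b)) (Finset.range l.length) := by
    apply Finset.filter_congr
    intro j hj
    rw [List.take_append_of_le_length (Finset.mem_range.1 hj).le]
  by_cases h : l.sum < b
  · rw [if_pos (by rwa [h1]), h2, Finset.card_insert_of_notMem (by simp), if_pos h]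
  · rw [if_neg (by rwa [h1]), h2, if_neg h]
    omega

lemma Ncnt_append (l₁ l₂ : List ℝ) (b : ℝ) :
    Ncnt (l₁ ++ l₂) b = Ncnt l₁ b + Ncnt l₂ (b - l₁.sum) := by
  induction l₂ using List.reverseRecOn with
  | nil => simp [Ncnt_nil]
  | append_singleton l₂ x ih =>
    rw [← List.append_assoc, Ncnt_snoc, ih, Ncnt_snoc, List.sum_append]
    have : (l₁.sum + l₂.sum < b) ↔ (l₂.sum < b - l₁.sum) := by constructor <;> intro <;> linarith
    by_cases h : l₂.sum < b - l₁.sum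
    · rw [if_pos h, if_pos (this.2 h)]; ring
    · rw [if_neg h, if_neg (fun hc => h (this.1 hc))]
      omega

lemma Ncnt_map_mul {c : ℝ} (hc : 0 < c) (l : List ℝ) (b : ℝ) :
    Ncnt (l.map (fun x => c * x)) b = Ncnt l (b / c) := by
  unfold Ncnt
  rw [List.length_map]
  congr 1
  apply Finset.filter_congr
  intro j _
  rw [← List.map_take]
  have hs : ((l.take j).map (fun x => c * x)).sum = c * (l.take j).sum := by
    induction l.take j with
    | nil => simp
    | cons y t iht => simp [iht]; ring
  rw [hs]
  constructor
  · intro h; rwa [lt_div_iff₀' hc]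
  · intro h; rwa [lt_div_iff₀' hc] at h

lemma Ncnt_of_nonpos {l : List ℝ} {b : ℝ} (hb : b ≤ 0) (hl : ∀ x ∈ l, 0 ≤ x) :
    Ncnt l b = 0 := by
  unfold Ncnt
  rw [Finset.card_eq_zero, Finset.filter_eq_empty_iff]
  intro j _
  have : 0 ≤ (l.take j).sum :=
    List.sum_nonneg (fun x hx => hl x (List.take_subset j l hx))
  push_neg
  linarith

lemma Ncnt_of_ge {l : List ℝ} {b : ℝ} (hb : l.sum ≤ b) (hl : ∀ x ∈ l, 0 < x) :
    Ncnt l b = l.length := by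
  unfold Ncnt
  have hfe : Finset.filter (fun j => ((l.take j).sum < b)) (Finset.range l.length)
      = Finset.range l.length := by
    rw [Finset.filter_eq_self]
    intro j hj
    have hj' := Finset.mem_range.1 hj
    have hsplit : (l.take j).sum + (l.drop j).sum = l.sum := by
      rw [← List.sum_append, List.take_append_drop]
    have hdrop : l.drop j ≠ [] := by
      intro h
      have := congrArg List.length h
      simp at this
      omega
    have hpos : 0 < (l.drop j).sum :=
      List.sum_pos _ (fun x hx => hl x (List.drop_subset j l hx)) hdrop
    linarith
  rw [hfe, Finset.card_range]

lemma Ncnt_blocks {l : List ℝ} (hl : ∀ x ∈ l, 0 < x) {s : ℝ} (hs : l.sum = s)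
    (hs0 : 0 < s) :
    ∀ m : ℕ, ∀ b : ℝ, 0 ≤ b → b ≤ m * s →
    ∃ (k : ℕ) (c : ℝ), k ≤ m ∧ 0 ≤ c ∧ c ≤ s ∧ b = k * s + c ∧
      Ncnt (List.replicate m l).flatten b = k * l.length + Ncnt l c := by
  intro m
  induction m with
  | zero =>
    intro b hb0 hb1
    have hb : b = 0 := le_antisymm (by simpa using hb1) hb0
    refine ⟨0, 0, le_refl _, le_refl _, hs0.le, by simp [hb], ?_⟩
    have h0 : (List.replicate 0 l).flatten = ([] : List ℝ) := by simp
    rw [hb, h0, Ncnt_nil, Ncnt_of_nonpos le_rfl (fun x hx => (hl x hx).le)]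
    simp
  | succ m ih =>
    intro b hb0 hb1
    rw [List.replicate_succ, List.flatten_cons, Ncnt_append, hs]
    by_cases hbs : b ≤ s
    · refine ⟨0, b, Nat.zero_le _, hb0, hbs, by simp, ?_⟩
      have hmem : ∀ x ∈ (List.replicate m l).flatten, 0 ≤ x := by
        intro x hx
        obtain ⟨l', hl', hxl⟩ := List.mem_flatten.1 hx
        exact (hl x ((List.eq_of_mem_replicate hl') ▸ hxl)).le
      rw [Ncnt_of_nonpos (by linarith) hmem]
      ring
    · push_neg at hbs
      obtain ⟨k, c, hk, hc0, hc1, hbc, hN⟩ := ih (b - s)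
        (by linarith) (by push_cast at hb1 ⊢; linarith)
      refine ⟨k + 1, c, by omega, hc0, hc1, by push_cast; linarith, ?_⟩
      rw [Ncnt_of_ge (hs ▸ hbs.le) hl, hN]
      push_cast
      ring

lemma ncard_fin (m : ℕ) (Q : ℕ → Prop) :
    {j : Fin m | Q j.val}.ncard = ((Finset.range m).filter Q).card := by
  rw [← Set.ncard_image_of_injective {j : Fin m | Q j.val} Fin.val_injective]
  rw [← Set.ncard_coe_finset]
  congr 1
  ext j
  simp only [Set.mem_image, Set.mem_setOf_eq, Finset.coe_filter, Finset.mem_range]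
  constructor
  · rintro ⟨i, hQ, rfl⟩; exact ⟨i.isLt, hQ⟩
  · rintro ⟨hj, hQ⟩; exact ⟨⟨j, hj⟩, hQ, rfl⟩

lemma countBelow_eq (L S : ℕ) (β : ℝ) (n : ℕ) (b : ℝ) :
    countBelow L S β n b = Ncnt (LSpart L S β n) b := by
  unfold countBelow Ncnt lep
  exact ncard_fin (LSpart L S β n).length (fun j => ((LSpart L S β n).take j).sum < b)

end Part3

namespace Part4
open LSaux Part2 Part3

variable {L S : ℕ} {β : ℝ}

-- tₙ as a real number
noncomputable def tR (L S : ℕ) (β : ℝ) (n : ℕ) : ℝ := ((LSpart L S β n).length : ℝ)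

lemma tR_rec (hβ0 : 0 < β) (hβ1 : β < 1) (n : ℕ) :
    tR L S β (n+2) = L * tR L S β (n+1) + S * tR L S β n := by
  unfold tR
  rw [t_rec hβ0 hβ1]
  push_cast
  ring

lemma hSβ (hLS : S = L + 1) (hβ0 : 0 < β)
    (hβ : (L : ℝ) * β + (S : ℝ) * β ^ 2 = 1) : (S : ℝ) * β = 1 := by
  have hL' : (L : ℝ) = (S : ℝ) - 1 := by
    rw [hLS]; push_cast; ring
  have hfac : ((S : ℝ) * β - 1) * (β + 1) = 0 := by
    rw [hL'] at hβ
    linear_combination hβ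
  rcases mul_eq_zero.1 hfac with h | h
  · linarith
  · linarith

lemma e_neg (hβ0 : 0 < β) (hβ1 : β < 1) (hLS : S = L + 1)
    (hβ : (L : ℝ) * β + (S : ℝ) * β ^ 2 = 1) (n : ℕ) :
    tR L S β (n+1) - β * tR L S β (n+2) = -(tR L S β n - β * tR L S β (n+1)) := by
  have hrec := tR_rec (L := L) (S := S) hβ0 hβ1 n
  have hsb := hSβ hLS hβ0 hβ
  linear_combination (-β) * hrec + (-(tR L S β (n+1))) * hβ
    + (β * tR L S β (n+1) - tR L S β n) * hsb

lemma e_bound (hβ0 : 0 < β) (hβ1 : β < 1) (hLS : S = L + 1)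
    (hβ : (L : ℝ) * β + (S : ℝ) * β ^ 2 = 1) (n : ℕ) :
    |tR L S β n - β * tR L S β (n+1)| ≤ 1 := by
  induction n with
  | zero =>
    have h0 : tR L S β 0 = 1 := by unfold tR; simp [LSpart]
    have h1 : tR L S β 1 = L + S := by
      unfold tR; rw [t1_eq hβ0 hβ1]; push_cast; ring
    have hsb := hSβ hLS hβ0 hβ
    rw [h0, h1]
    rw [abs_le]
    constructor
    · nlinarith
    · nlinarith
  | succ n ih =>
    rw [e_neg hβ0 hβ1 hLS hβ n, abs_neg]
    exact ih

lemma f_bound (hβ0 : 0 < β) (hβ1 : β < 1) (hLS : S = L + 1)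
    (hβ : (L : ℝ) * β + (S : ℝ) * β ^ 2 = 1) (n : ℕ) :
    |tR L S β n - β ^ 2 * tR L S β (n+2)| ≤ 2 := by
  have h1 := e_bound hβ0 hβ1 hLS hβ n
  have h2 := e_bound hβ0 hβ1 hLS hβ (n+1)
  have key : tR L S β n - β ^ 2 * tR L S β (n+2)
      = (tR L S β n - β * tR L S β (n+1)) + β * (tR L S β (n+1) - β * tR L S β (n+2)) := by
    ring
  rw [key]
  have h2' : |β * (tR L S β (n+1) - β * tR L S β (n+2))| ≤ β := by
    rw [abs_mul, abs_of_pos hβ0]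
    nlinarith [h2, abs_nonneg (tR L S β (n+1) - β * tR L S β (n+2))]
  calc |_ + _| ≤ |tR L S β n - β * tR L S β (n+1)|
        + |β * (tR L S β (n+1) - β * tR L S β (n+2))| := abs_add_le _ _
    _ ≤ 1 + β := add_le_add h1 h2'
    _ ≤ 2 := by linarith

end Part4

namespace Part5
open LSaux Part2 Part3 Part4

variable {L S : ℕ} {β : ℝ}

lemma sum_map_mul (c : ℝ) (l : List ℝ) : (l.map (fun x => c * x)).sum = c * l.sum := by
  induction l with
  | nil => simp
  | cons y t iht => simp [iht]; ring

lemma base_est (l : List ℝ) (b : ℝ) (hb0 : 0 ≤ b) (hb1 : b ≤ 1) :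
    |(Ncnt l b : ℝ) - (l.length : ℝ) * b| ≤ (l.length : ℝ) := by
  have h1 : (Ncnt l b : ℝ) ≤ (l.length : ℝ) := by exact_mod_cast Ncnt_le l b
  have h2 : (0 : ℝ) ≤ (Ncnt l b : ℝ) := Nat.cast_nonneg _
  have h3 : (0 : ℝ) ≤ (l.length : ℝ) := Nat.cast_nonneg _
  rw [abs_le]
  constructor <;> nlinarith

set_option maxHeartbeats 1000000 in
lemma main_est (hL : 0 < L) (hβ0 : 0 < β) (hβ1 : β < 1) (hLS : S = L + 1)
    (hβ : (L : ℝ) * β + (S : ℝ) * β ^ 2 = 1) (n : ℕ) :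
    ∀ b : ℝ, 0 ≤ b → b ≤ 1 →
      |(Ncnt (LSpart L S β n) b : ℝ) - tR L S β n * b|
        ≤ ((L : ℝ) + 2 * S + 2) * (n + 1) := by
  have hS2 : (2 : ℝ) ≤ S := by
    have : (2 : ℕ) ≤ S := by omega
    exact_mod_cast this
  have hL1 : (1 : ℝ) ≤ L := by exact_mod_cast hL
  induction n using Nat.strong_induction_on with
  | _ n ih =>
    match n with
    | 0 =>
      intro b hb0 hb1
      have := base_est (LSpart L S β 0) b hb0 hb1
      have hlen : ((LSpart L S β 0).length : ℝ) = 1 := by simp [LSpart]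
      unfold tR
      rw [hlen] at this ⊢
      calc |(Ncnt (LSpart L S β 0) b : ℝ) - 1 * b| ≤ 1 := this
        _ ≤ ((L : ℝ) + 2 * S + 2) * ((0 : ℕ) + 1) := by push_cast; nlinarith
    | 1 =>
      intro b hb0 hb1
      have := base_est (LSpart L S β 1) b hb0 hb1
      have hlen : ((LSpart L S β 1).length : ℝ) = L + S := by
        rw [t1_eq hβ0 hβ1]; push_cast; ring
      unfold tR
      rw [hlen] at this ⊢
      calc |(Ncnt (LSpart L S β 1) b : ℝ) - ((L : ℝ) + S) * b| ≤ (L : ℝ) + S := this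
        _ ≤ ((L : ℝ) + 2 * S + 2) * ((1 : ℕ) + 1) := by push_cast; nlinarith
    | (m+2) =>
      intro b hb0 hb1
      obtain ⟨l₁, hl₁def⟩ : ∃ l₁ : List ℝ,
          l₁ = (LSpart L S β (m+1)).map (fun x => β * x) := ⟨_, rfl⟩
      obtain ⟨l₂, hl₂def⟩ : ∃ l₂ : List ℝ,
          l₂ = (LSpart L S β m).map (fun x => β ^ 2 * x) := ⟨_, rfl⟩
      have hD : LSpart L S β (m+2)
          = (List.replicate L l₁).flatten ++ (List.replicate S l₂).flatten := by
        rw [hl₁def, hl₂def]; exact rho_decomp hβ0 hβ1 m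
      have hsum1 : l₁.sum = β := by
        rw [hl₁def, sum_map_mul, rho_sum hβ, mul_one]
      have hsum2 : l₂.sum = β ^ 2 := by
        rw [hl₂def, sum_map_mul, rho_sum hβ, mul_one]
      have hpos1 : ∀ x ∈ l₁, 0 < x := by
        rw [hl₁def]
        intro x hx
        obtain ⟨y, hy, rfl⟩ := List.mem_map.1 hx
        exact mul_pos hβ0 (rho_pos hβ0 hβ1 _ y hy)
      have hpos2 : ∀ x ∈ l₂, 0 < x := by
        rw [hl₂def]
        intro x hx
        obtain ⟨y, hy, rfl⟩ := List.mem_map.1 hx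
        exact mul_pos (by positivity) (rho_pos hβ0 hβ1 _ y hy)
      have hlen1 : l₁.length = (LSpart L S β (m+1)).length := by
        rw [hl₁def, List.length_map]
      have hlen2 : l₂.length = (LSpart L S β m).length := by
        rw [hl₂def, List.length_map]
      have hAsum : (List.replicate L l₁).flatten.sum = L * β := by
        rw [flatten_replicate_sum, hsum1]
      have hsplit : Ncnt (LSpart L S β (m+2)) b
          = Ncnt (List.replicate L l₁).flatten b
            + Ncnt (List.replicate S l₂).flatten (b - L * β) := by
        rw [hD, Ncnt_append, hAsum]
      obtain ⟨E, hEdef⟩ : ∃ E : ℝ, E = tR L S β (m+1) - β * tR L S β (m+2) := ⟨_, rfl⟩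
      obtain ⟨F, hFdef⟩ : ∃ F : ℝ, F = tR L S β m - β ^ 2 * tR L S β (m+2) := ⟨_, rfl⟩
      have hE : |E| ≤ 1 := by rw [hEdef]; exact e_bound hβ0 hβ1 hLS hβ (m+1)
      have hF : |F| ≤ 2 := by rw [hFdef]; exact f_bound hβ0 hβ1 hLS hβ m
      by_cases hcase : b ≤ L * β
      · -- b lies in the long region
        have hB0 : Ncnt (List.replicate S l₂).flatten (b - L * β) = 0 := by
          apply Ncnt_of_nonpos (by linarith)
          intro x hx
          obtain ⟨l', hl', hxl⟩ := List.mem_flatten.1 hx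
          exact (hpos2 x ((List.eq_of_mem_replicate hl') ▸ hxl)).le
        obtain ⟨k, c, hk, hc0, hc1, hbc, hN⟩ :=
          Ncnt_blocks hpos1 hsum1 hβ0 L b hb0 hcase
        obtain ⟨c', hc'def⟩ : ∃ x : ℝ, x = c / β := ⟨_, rfl⟩
        have hc'0 : 0 ≤ c' := hc'def ▸ div_nonneg hc0 hβ0.le
        have hc'1 : c' ≤ 1 := by
          rw [hc'def, div_le_one hβ0]; exact hc1
        have hcc : c = β * c' := by
          rw [hc'def]; field_simp
        have hNc : Ncnt l₁ c = Ncnt (LSpart L S β (m+1)) c' := by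
          rw [hl₁def, Ncnt_map_mul hβ0, hc'def]
        have hIH := ih (m+1) (by omega) c' hc'0 hc'1
        have hkR : (k : ℝ) ≤ L := by exact_mod_cast hk
        have hbeq : b = (k : ℝ) * β + β * c' := by
          rw [hbc, hcc]
        have heq : (Ncnt (LSpart L S β (m+2)) b : ℝ) - tR L S β (m+2) * b
            = (k : ℝ) * E + ((Ncnt (LSpart L S β (m+1)) c' : ℝ) - tR L S β (m+1) * c')
              + c' * E := by
          rw [hsplit, hB0, hN, hNc]
          push_cast
          rw [hbeq, hEdef, hlen1]
          unfold tR
          ring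
        rw [heq]
        have h1 : |(k : ℝ) * E| ≤ L := by
          rw [abs_mul, abs_of_nonneg (Nat.cast_nonneg k)]
          nlinarith [abs_nonneg E, Nat.cast_nonneg (α := ℝ) k]
        have h3 : |c' * E| ≤ 1 := by
          rw [abs_mul, abs_of_nonneg hc'0]
          nlinarith [abs_nonneg E]
        have htri := abs_add_three ((k : ℝ) * E)
          ((Ncnt (LSpart L S β (m+1)) c' : ℝ) - tR L S β (m+1) * c') (c' * E)
        push_cast at hIH ⊢
        nlinarith [htri, hIH, h1, h3]
      · -- b lies in the short region
        push_neg at hcase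
        have hA : Ncnt (List.replicate L l₁).flatten b = L * l₁.length := by
          rw [Ncnt_of_ge (by rw [hAsum]; exact hcase.le) (by
            intro x hx
            obtain ⟨l', hl', hxl⟩ := List.mem_flatten.1 hx
            exact hpos1 x ((List.eq_of_mem_replicate hl') ▸ hxl)),
            flatten_replicate_length]
        have hβ2 : (0 : ℝ) < β ^ 2 := by positivity
        have hble : b - L * β ≤ S * β ^ 2 := by linarith [hβ]
        obtain ⟨k, c, hk, hc0, hc1, hbc, hN⟩ :=
          Ncnt_blocks hpos2 hsum2 hβ2 S (b - L * β) (by linarith) hble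
        obtain ⟨c', hc'def⟩ : ∃ x : ℝ, x = c / β ^ 2 := ⟨_, rfl⟩
        have hc'0 : 0 ≤ c' := hc'def ▸ div_nonneg hc0 hβ2.le
        have hc'1 : c' ≤ 1 := by
          rw [hc'def, div_le_one hβ2]; exact hc1
        have hcc : c = β ^ 2 * c' := by
          rw [hc'def]; field_simp
        have hNc : Ncnt l₂ c = Ncnt (LSpart L S β m) c' := by
          rw [hl₂def, Ncnt_map_mul hβ2, hc'def]
        have hIH := ih m (by omega) c' hc'0 hc'1
        have hkR : (k : ℝ) ≤ S := by exact_mod_cast hk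
        have hbeq : b = L * β + k * β ^ 2 + β ^ 2 * c' := by
          have : b - L * β = k * β ^ 2 + c := hbc
          rw [hcc] at this
          linarith
        have heq : (Ncnt (LSpart L S β (m+2)) b : ℝ) - tR L S β (m+2) * b
            = (L : ℝ) * E + (k : ℝ) * F
              + ((Ncnt (LSpart L S β m) c' : ℝ) - tR L S β m * c') + c' * F := by
          rw [hsplit, hA, hN, hNc]
          push_cast
          rw [hbeq, hEdef, hFdef, hlen1, hlen2]
          unfold tR
          ring
        rw [heq]
        have h1 : |(L : ℝ) * E| ≤ L := by
          rw [abs_mul, abs_of_nonneg (Nat.cast_nonneg L)]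
          nlinarith [abs_nonneg E]
        have h2 : |(k : ℝ) * F| ≤ 2 * S := by
          rw [abs_mul, abs_of_nonneg (Nat.cast_nonneg k)]
          nlinarith [abs_nonneg F, Nat.cast_nonneg (α := ℝ) k]
        have h4 : |c' * F| ≤ 2 := by
          rw [abs_mul, abs_of_nonneg hc'0]
          nlinarith [abs_nonneg F]
        have htri1 := abs_add_le ((L : ℝ) * E + (k : ℝ) * F
            + ((Ncnt (LSpart L S β m) c' : ℝ) - tR L S β m * c')) (c' * F)
        have htri2 := abs_add_three ((L : ℝ) * E) ((k : ℝ) * F)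
          ((Ncnt (LSpart L S β m) c' : ℝ) - tR L S β m * c')
        push_cast at hIH ⊢
        nlinarith [htri1, htri2, hIH, h1, h2, h4]

end Part5

/-- If `S = L + 1`, there is a constant `C₂ > 0`, depending only on `L` and `S`, with
`(tₙ/log tₙ) · D*(ρⁿ) ≤ C₂` for all `n ≥ 2`; i.e. `D*(ρⁿ) ≤ C₂ (log tₙ)/tₙ`. -/
theorem starDisc_le_of_S_eq (L S : ℕ) (hL : 0 < L) (hS : 0 < S) (hLS : S = L + 1)
    (β : ℝ) (hβ0 : 0 < β) (hβ1 : β < 1)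
    (hβ : (L : ℝ) * β + (S : ℝ) * β ^ 2 = 1) :
    ∃ C₂ : ℝ, 0 < C₂ ∧ ∀ n : ℕ, 2 ≤ n →
      (((LSpart L S β n).length : ℝ) / Real.log ((LSpart L S β n).length : ℝ)) *
          starDisc L S β n ≤ C₂ ∧
      starDisc L S β n ≤
        C₂ * Real.log ((LSpart L S β n).length : ℝ) / ((LSpart L S β n).length : ℝ) := by
  have hS2 : 2 ≤ S := by omega
  have hSR : (2 : ℝ) ≤ S := by exact_mod_cast hS2
  have hLR : (1 : ℝ) ≤ L := by exact_mod_cast hL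
  set C₀ : ℝ := (L : ℝ) + 2 * S + 2 with hC₀def
  have hC₀pos : 0 < C₀ := by rw [hC₀def]; linarith
  refine ⟨4 * C₀, by linarith, ?_⟩
  intro n hn
  set tN : ℕ := (LSpart L S β n).length with htNdef
  set t : ℝ := (tN : ℝ) with htdef
  have h2n : (2 : ℕ) ^ n ≤ tN := Part2.t_ge hβ0 hβ1 hL hS2 n
  have h2nR : (2 : ℝ) ^ n ≤ t := by
    rw [htdef]; exact_mod_cast h2n
  have h4t : (4 : ℝ) ≤ t := by
    have : (4 : ℝ) = 2 ^ 2 := by norm_num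
    have h22 : (2 : ℝ) ^ 2 ≤ 2 ^ n := by
      apply pow_le_pow_right₀ (by norm_num) hn
    linarith
  have ht0 : (0 : ℝ) < t := by linarith
  have hlogt_pos : 1 < Real.log t := by
    rw [Real.lt_log_iff_exp_lt ht0]
    have := Real.exp_one_lt_d9
    linarith
  have hnlog : (n : ℝ) ≤ 2 * Real.log t := by
    have h1 : Real.log ((2 : ℝ) ^ n) ≤ Real.log t :=
      Real.log_le_log (by positivity) h2nR
    rw [Real.log_pow] at h1
    have h2 := Real.log_two_gt_d9
    have hn0 : (0 : ℝ) ≤ n := Nat.cast_nonneg n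
    nlinarith
  have hkey : C₀ * (n + 1) ≤ 4 * C₀ * Real.log t := by
    have hn2 : (2 : ℝ) ≤ (n : ℝ) := by exact_mod_cast hn
    have : ((n : ℝ) + 1) ≤ 4 * Real.log t := by nlinarith
    nlinarith
  have hD : starDisc L S β n ≤ C₀ * (n + 1) / t := by
    apply Real.sSup_le
    · rintro x ⟨b, hb0, hb1, rfl⟩
      have hmain := Part5.main_est hL hβ0 hβ1 hLS hβ n b hb0.le hb1
      rw [show Part4.tR L S β n = t from rfl] at hmain
      rw [Part3.countBelow_eq]
      have heq : (Part3.Ncnt (LSpart L S β n) b : ℝ) / t - b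
          = ((Part3.Ncnt (LSpart L S β n) b : ℝ) - t * b) / t := by
        field_simp
      rw [show ((LSpart L S β n).length : ℝ) = t from rfl, heq, abs_div, abs_of_pos ht0]
      gcongr
    · positivity
  have hD2 : starDisc L S β n ≤ 4 * C₀ * Real.log t / t := by
    refine hD.trans ?_
    gcongr
  constructor
  · have hlogpos : (0 : ℝ) < Real.log t := by linarith
    have hfrac : (0 : ℝ) ≤ t / Real.log t := by positivity
    calc t / Real.log t * starDisc L S β n
        ≤ t / Real.log t * (4 * C₀ * Real.log t / t) :=
          mul_le_mul_of_nonneg_left hD2 hfrac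
      _ = 4 * C₀ := by field_simp
  · exact hD2
end

section
/- Fix positive integers L and S with S > L + 1, let β ∈ (0,1) satisfy Lβ + Sβ² = 1, and let {ρⁿ} be the LS-sequence of partitions of [0,1), with left endpoints y₁ⁿ, …, y_{tₙ}ⁿ. Then there exists a constant C₃ > 0, depending only on L and S, such that for all n ≥ 1, (Sβ²)⁻ⁿ · sup_{0 < b ≤ 1} |(1/tₙ)·#{j : yⱼⁿ < b} − b| ≤ C₃; i.e. the star-discrepancy satisfies D*(ρⁿ) ≤ C₃ (Sβ²)ⁿ. -/
open Classical in
noncomputable def LSblk (L S : ℕ) (β : ℝ) (n : ℕ) : ℝ → List ℝ := fun x =>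
      if x = β ^ n then
        List.replicate L (β ^ (n + 1)) ++ List.replicate S (β ^ (n + 2))
      else [x]

lemma LSpart_succ (L S : ℕ) (β : ℝ) (n : ℕ) :
    LSpart L S β (n + 1) = (LSpart L S β n).flatMap (LSblk L S β n) := by
  rw [LSpart]; rfl

open Classical in
noncomputable def cnt (c : ℝ) (l : List ℝ) : ℕ := l.countP (fun y => decide (y = c))

lemma cnt_nil (c : ℝ) : cnt c [] = 0 := rfl

lemma cnt_append (c : ℝ) (l₁ l₂ : List ℝ) : cnt c (l₁ ++ l₂) = cnt c l₁ + cnt c l₂ :=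
  List.countP_append

lemma cnt_replicate (c d : ℝ) (m : ℕ) : cnt c (List.replicate m d) = if d = c then m else 0 := by
  classical
  simp [cnt, List.countP_replicate]

lemma cnt_replicate_self (c : ℝ) (m : ℕ) : cnt c (List.replicate m c) = m := by
  simp [cnt_replicate]

lemma cnt_replicate_ne {c d : ℝ} (h : d ≠ c) (m : ℕ) : cnt c (List.replicate m d) = 0 := by
  simp [cnt_replicate, h]

lemma cnt_singleton_self (c : ℝ) : cnt c [c] = 1 := by
  classical
  simp [cnt]

lemma cnt_singleton_ne {c d : ℝ} (h : d ≠ c) : cnt c [d] = 0 := by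
  classical
  simp [cnt, h]

lemma cnt_take_le (c : ℝ) (l : List ℝ) (k : ℕ) : cnt c (l.take k) ≤ cnt c l :=
  (List.take_sublist k l).countP_le

lemma sum_eq_cnt {u v : ℝ} (huv : u ≠ v) :
    ∀ (l : List ℝ), (∀ x ∈ l, x = u ∨ x = v) →
      l.sum = (cnt u l : ℝ) * u + (cnt v l : ℝ) * v := by
  classical
  intro l
  induction l with
  | nil => simp [cnt_nil]
  | cons a t ih =>
    intro h
    have ht := ih (fun x hx => h x (List.mem_cons_of_mem a hx))
    have hct : ∀ c : ℝ, cnt c (a :: t) = cnt c t + if a = c then 1 else 0 := by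
      intro c
      simp [cnt, List.countP_cons]
    rcases h a List.mem_cons_self with hau | hav
    · have hav' : ¬(a = v) := by rw [hau]; exact huv
      rw [List.sum_cons, ht, hct u, hct v, if_pos hau, if_neg hav']
      push_cast [hau]; ring
    · have hau' : ¬(a = u) := by rw [hav]; exact Ne.symm huv
      rw [List.sum_cons, ht, hct u, hct v, if_pos hav, if_neg hau']
      push_cast [hav]; ring

lemma len_eq_cnt {u v : ℝ} (huv : u ≠ v) :
    ∀ (l : List ℝ), (∀ x ∈ l, x = u ∨ x = v) →
      l.length = cnt u l + cnt v l := by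
  classical
  intro l
  induction l with
  | nil => simp [cnt_nil]
  | cons a t ih =>
    intro h
    have ht := ih (fun x hx => h x (List.mem_cons_of_mem a hx))
    have hct : ∀ c : ℝ, cnt c (a :: t) = cnt c t + if a = c then 1 else 0 := by
      intro c
      simp [cnt, List.countP_cons]
    rcases h a List.mem_cons_self with hau | hav
    · have hav' : ¬(a = v) := by rw [hau]; exact huv
      rw [List.length_cons, ht, hct u, hct v, if_pos hau, if_neg hav']; omega
    · have hau' : ¬(a = u) := by rw [hav]; exact Ne.symm huv
      rw [List.length_cons, ht, hct u, hct v, if_pos hav, if_neg hau']; omega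

lemma pow_ne_pow {β : ℝ} (hβ0 : 0 < β) (hβ1 : β < 1) {i j : ℕ} (h : i < j) :
    β ^ i ≠ β ^ j :=
  ne_of_gt (pow_lt_pow_right_of_lt_one₀ hβ0 hβ1 h)

lemma mem_LSpart {L S : ℕ} {β : ℝ} :
    ∀ (n : ℕ) (x : ℝ), x ∈ LSpart L S β n → x = β ^ n ∨ x = β ^ (n + 1) := by
  intro n
  induction n with
  | zero =>
    intro x hx
    left
    simpa [LSpart] using hx
  | succ n ih =>
    intro x hx
    rw [LSpart_succ, List.mem_flatMap] at hx
    obtain ⟨y, hy, hxy⟩ := hx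
    unfold LSblk at hxy
    by_cases hyn : y = β ^ n
    · rw [if_pos hyn, List.mem_append] at hxy
      rcases hxy with h | h
      · left; exact List.eq_of_mem_replicate h
      · right; exact List.eq_of_mem_replicate h
    · rw [if_neg hyn, List.mem_singleton] at hxy
      rcases ih y hy with h | h
      · exact absurd h hyn
      · left; rw [hxy, h]

section Main
variable {L S : ℕ} {β : ℝ}

lemma LSblk_long (n : ℕ) : LSblk L S β n (β ^ n) =
    List.replicate L (β ^ (n + 1)) ++ List.replicate S (β ^ (n + 2)) := by
  simp [LSblk]

lemma LSblk_short (hβ0 : 0 < β) (hβ1 : β < 1) (n : ℕ) :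
    LSblk L S β n (β ^ (n + 1)) = [β ^ (n + 1)] := by
  simp [LSblk, (pow_ne_pow hβ0 hβ1 (Nat.lt_succ_self n)).symm]

lemma sum_flatMap' (f : ℝ → List ℝ) (l : List ℝ) :
    (l.flatMap f).sum = (l.map (fun x => (f x).sum)).sum := by
  induction l with
  | nil => simp
  | cons a t ih => simp [List.flatMap_cons, ih]

lemma sum_LSblk (hβ : (L : ℝ) * β + (S : ℝ) * β ^ 2 = 1) (n : ℕ) (x : ℝ) :
    (LSblk L S β n x).sum = x := by
  unfold LSblk
  by_cases h : x = β ^ n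
  · rw [if_pos h, h]
    simp only [List.sum_append, List.sum_replicate, nsmul_eq_mul]
    have : β ^ (n+1) = β ^ n * β := by ring
    have h2 : β ^ (n+2) = β ^ n * β ^ 2 := by ring
    rw [this, h2]
    linear_combination (β ^ n) * hβ
  · rw [if_neg h]; simp

lemma sum_LSpart (hβ : (L : ℝ) * β + (S : ℝ) * β ^ 2 = 1) (n : ℕ) :
    (LSpart L S β n).sum = 1 := by
  induction n with
  | zero => simp [LSpart]
  | succ n ih =>
    rw [LSpart_succ, sum_flatMap']
    rw [show List.map (fun x => (LSblk L S β n x).sum) (LSpart L S β n)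
        = List.map id (LSpart L S β n) from
        List.map_congr_left (fun x _ => sum_LSblk hβ n x), List.map_id, ih]

lemma LSpart_ne_nil (hβ : (L : ℝ) * β + (S : ℝ) * β ^ 2 = 1) (n : ℕ) :
    LSpart L S β n ≠ [] := by
  intro h
  have := sum_LSpart (L := L) (S := S) hβ n
  rw [h] at this
  simp at this

lemma cnt_flatMap_A (hL : 0 < L) (hβ0 : 0 < β) (hβ1 : β < 1) (n : ℕ) :
    ∀ (l : List ℝ), (∀ x ∈ l, x = β ^ n ∨ x = β ^ (n + 1)) →
      cnt (β ^ (n + 1)) (l.flatMap (LSblk L S β n)) =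
        L * cnt (β ^ n) l + cnt (β ^ (n + 1)) l := by
  intro l
  induction l with
  | nil => simp [cnt_nil]
  | cons a t ih =>
    intro h
    have ht := ih (fun x hx => h x (List.mem_cons_of_mem a hx))
    have hct : ∀ c : ℝ, cnt c (a :: t) = cnt c t + if a = c then 1 else 0 := by
      intro c; simp [cnt, List.countP_cons]
    rw [List.flatMap_cons, cnt_append, ht, hct (β ^ n), hct (β ^ (n+1))]
    rcases h a List.mem_cons_self with hau | hav
    · rw [hau, LSblk_long, if_pos rfl,
        if_neg (pow_ne_pow hβ0 hβ1 (Nat.lt_succ_self n)), cnt_append, cnt_replicate_self,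
        cnt_replicate_ne (Ne.symm (pow_ne_pow hβ0 hβ1 (by omega : n + 1 < n + 2)))]
      ring
    · rw [hav, LSblk_short hβ0 hβ1,
        if_neg (Ne.symm (pow_ne_pow hβ0 hβ1 (Nat.lt_succ_self n))), if_pos rfl,
        cnt_singleton_self]
      ring

lemma cnt_flatMap_B (hβ0 : 0 < β) (hβ1 : β < 1) (n : ℕ) :
    ∀ (l : List ℝ), (∀ x ∈ l, x = β ^ n ∨ x = β ^ (n + 1)) →
      cnt (β ^ (n + 2)) (l.flatMap (LSblk L S β n)) = S * cnt (β ^ n) l := by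
  intro l
  induction l with
  | nil => simp [cnt_nil]
  | cons a t ih =>
    intro h
    have ht := ih (fun x hx => h x (List.mem_cons_of_mem a hx))
    have hct : ∀ c : ℝ, cnt c (a :: t) = cnt c t + if a = c then 1 else 0 := by
      intro c; simp [cnt, List.countP_cons]
    rw [List.flatMap_cons, cnt_append, ht, hct (β ^ n)]
    rcases h a List.mem_cons_self with hau | hav
    · rw [hau, LSblk_long, if_pos rfl, cnt_append,
        cnt_replicate_ne (pow_ne_pow hβ0 hβ1 (by omega : n + 1 < n + 2)),
        cnt_replicate_self]
      ring
    · rw [hav, LSblk_short hβ0 hβ1,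
        if_neg (Ne.symm (pow_ne_pow hβ0 hβ1 (Nat.lt_succ_self n))),
        cnt_singleton_ne (pow_ne_pow hβ0 hβ1 (by omega : n + 1 < n + 2))]
      ring

/-- `βⁿ·Aₙ + βⁿ⁺¹·Bₙ = 1`. -/
lemma count_ell (hL : 0 < L) (hβ0 : 0 < β) (hβ1 : β < 1)
    (hβ : (L : ℝ) * β + (S : ℝ) * β ^ 2 = 1) (n : ℕ) :
    β ^ n * (cnt (β ^ n) (LSpart L S β n) : ℝ)
      + β ^ (n + 1) * (cnt (β ^ (n + 1)) (LSpart L S β n) : ℝ) = 1 := by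
  induction n with
  | zero =>
    have h1 : cnt ((β : ℝ) ^ 0) (LSpart L S β 0) = 1 := by
      simp only [LSpart, pow_zero]
      exact cnt_singleton_self 1
    have h2 : cnt ((β : ℝ) ^ 1) (LSpart L S β 0) = 0 := by
      simp only [LSpart]
      exact cnt_singleton_ne (by simpa using (pow_ne_pow hβ0 hβ1 (by omega : 0 < 1)))
    rw [h1, h2]; simp
  | succ n ih =>
    rw [LSpart_succ,
      cnt_flatMap_A hL hβ0 hβ1 n _ (mem_LSpart n),
      cnt_flatMap_B hβ0 hβ1 n _ (mem_LSpart n)]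
    push_cast
    push_cast at ih
    linear_combination ih + (cnt (β ^ n) (LSpart L S β n) : ℝ) * β ^ n * hβ

/-- `Bₙ − Sβ·Aₙ = (−Sβ)ⁿ⁺¹`. -/
lemma count_r (hL : 0 < L) (hβ0 : 0 < β) (hβ1 : β < 1)
    (hβ : (L : ℝ) * β + (S : ℝ) * β ^ 2 = 1) (n : ℕ) :
    (cnt (β ^ (n + 1)) (LSpart L S β n) : ℝ)
      - (S : ℝ) * β * (cnt (β ^ n) (LSpart L S β n) : ℝ) = (-((S : ℝ) * β)) ^ (n + 1) := by
  induction n with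
  | zero =>
    have h1 : cnt ((β : ℝ) ^ 0) (LSpart L S β 0) = 1 := by
      simp only [LSpart, pow_zero]
      exact cnt_singleton_self 1
    have h2 : cnt ((β : ℝ) ^ 1) (LSpart L S β 0) = 0 := by
      simp only [LSpart]
      exact cnt_singleton_ne (by simpa using (pow_ne_pow hβ0 hβ1 (by omega : 0 < 1)))
    rw [h1, h2]; simp
  | succ n ih =>
    rw [LSpart_succ,
      cnt_flatMap_A hL hβ0 hβ1 n _ (mem_LSpart n),
      cnt_flatMap_B hβ0 hβ1 n _ (mem_LSpart n)]
    push_cast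
    push_cast at ih
    have hpow : (-((S : ℝ) * β)) ^ (n + 2) = (-((S : ℝ) * β)) * (-((S : ℝ) * β)) ^ (n + 1) := by
      ring
    rw [hpow, ← ih]
    linear_combination (-(S : ℝ) * (cnt (β ^ n) (LSpart L S β n) : ℝ)) * hβ

lemma take_flatMap_decomp {α γ : Type*} (f : α → List γ) :
    ∀ (l : List α) (k : ℕ), l ≠ [] → k ≤ (l.flatMap f).length →
    ∃ l₁ x l₂ j, l = l₁ ++ x :: l₂ ∧ j ≤ (f x).length ∧
      (l.flatMap f).take k = (l₁.flatMap f) ++ (f x).take j := by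
  intro l
  induction l with
  | nil => intro k h; exact absurd rfl h
  | cons a t ih =>
    intro k _ hk
    by_cases h : k ≤ (f a).length
    · refine ⟨[], a, t, k, rfl, h, ?_⟩
      rw [List.flatMap_cons, List.take_append,
        Nat.sub_eq_zero_of_le h, List.take_zero, List.append_nil, List.flatMap_nil,
        List.nil_append]
    · push_neg at h
      rcases t with _ | ⟨b, t'⟩
      · exfalso
        rw [List.flatMap_cons, List.flatMap_nil, List.append_nil] at hk
        omega
      · have hk' : k - (f a).length ≤ ((b :: t').flatMap f).length := by
          rw [List.flatMap_cons, List.length_append] at hk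
          omega
        obtain ⟨l₁, x, l₂, j, hdec, hj, htake⟩ :=
          ih (k - (f a).length) (List.cons_ne_nil b t') hk'
        refine ⟨a :: l₁, x, l₂, j, by rw [List.cons_append, ← hdec], hj, ?_⟩
        rw [List.flatMap_cons, List.take_append,
          List.take_of_length_le (le_of_lt h), htake, List.flatMap_cons,
          List.append_assoc]

lemma prefix_r_bound (hL : 0 < L) (hβ0 : 0 < β) (hβ1 : β < 1)
    (hβ : (L : ℝ) * β + (S : ℝ) * β ^ 2 = 1) (hSβ : 1 < (S : ℝ) * β) :
    ∀ n k, k ≤ (LSpart L S β n).length →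
      |(cnt (β ^ (n + 1)) ((LSpart L S β n).take k) : ℝ)
          - (S : ℝ) * β * (cnt (β ^ n) ((LSpart L S β n).take k) : ℝ)|
        ≤ ((S : ℝ) * β + ((S : ℝ) + (L : ℝ) * S * β) / ((S : ℝ) * β - 1)) * ((S : ℝ) * β) ^ n
          - ((S : ℝ) + (L : ℝ) * S * β) / ((S : ℝ) * β - 1) := by
  have hd0 : (0:ℝ) < ((S : ℝ) + (L : ℝ) * S * β) / ((S : ℝ) * β - 1) := by
    have hl0 : (0:ℝ) < L := by exact_mod_cast hL
    have hS0 : (0:ℝ) < S := by nlinarith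
    apply div_pos
    · nlinarith
    · linarith
  set d : ℝ := ((S : ℝ) + (L : ℝ) * S * β) / ((S : ℝ) * β - 1) with hdd
  have hd : d * ((S : ℝ) * β - 1) = (S : ℝ) + (L : ℝ) * S * β := by
    rw [hdd]; exact div_mul_cancel₀ _ (by linarith)
  intro n
  induction n with
  | zero =>
    intro k hk
    simp only [LSpart, List.length_cons, List.length_nil] at hk
    interval_cases k
    · simp only [List.take_zero, cnt_nil]
      simp only [pow_zero]
      rw [Nat.cast_zero]
      simp only [mul_zero, sub_zero, abs_zero]
      linarith
    · have h1 : cnt ((β : ℝ) ^ 0) ((LSpart L S β 0).take 1) = 1 := by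
        simp only [LSpart, List.take_succ_cons, List.take_zero, pow_zero]
        exact cnt_singleton_self 1
      have h2 : cnt ((β : ℝ) ^ 1) ((LSpart L S β 0).take 1) = 0 := by
        simp only [LSpart, List.take_succ_cons, List.take_zero]
        exact cnt_singleton_ne (by simpa using (pow_ne_pow hβ0 hβ1 (by omega : 0 < 1)))
      rw [h1, h2, Nat.cast_zero, Nat.cast_one]
      rw [abs_of_nonpos (by linarith)]
      simp only [pow_zero]
      linarith
  | succ n ih =>
    intro k hk
    rw [LSpart_succ] at hk ⊢
    obtain ⟨l₁, x, l₂, j, hdec, hj, htake⟩ :=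
      take_flatMap_decomp (LSblk L S β n) (LSpart L S β n) k (LSpart_ne_nil hβ n) hk
    have hm : (LSpart L S β n).take l₁.length = l₁ := by rw [hdec, List.take_left]
    have hmle : l₁.length ≤ (LSpart L S β n).length := by
      rw [hdec, List.length_append]; omega
    have hIH := ih l₁.length hmle
    rw [hm] at hIH
    have hmem : ∀ y ∈ l₁, y = β ^ n ∨ y = β ^ (n + 1) := fun y hy =>
      mem_LSpart n y (by rw [hdec]; exact List.mem_append_left _ hy)
    have hxmem : x = β ^ n ∨ x = β ^ (n + 1) :=
      mem_LSpart n x (by rw [hdec]; exact List.mem_append_right _ List.mem_cons_self)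
    have haq : cnt (β ^ (n + 1)) ((LSblk L S β n x).take j) ≤ L := by
      calc cnt (β ^ (n + 1)) ((LSblk L S β n x).take j) ≤ cnt (β ^ (n + 1)) (LSblk L S β n x) :=
            cnt_take_le _ _ _
        _ ≤ L := by
            rcases hxmem with h | h
            · rw [h, LSblk_long, cnt_append, cnt_replicate_self,
                cnt_replicate_ne (Ne.symm (pow_ne_pow hβ0 hβ1 (by omega : n + 1 < n + 2)))]
              omega
            · rw [h, LSblk_short hβ0 hβ1, cnt_singleton_self]; omega
    have hbq : cnt (β ^ (n + 2)) ((LSblk L S β n x).take j) ≤ S := by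
      calc cnt (β ^ (n + 2)) ((LSblk L S β n x).take j) ≤ cnt (β ^ (n + 2)) (LSblk L S β n x) :=
            cnt_take_le _ _ _
        _ ≤ S := by
            rcases hxmem with h | h
            · rw [h, LSblk_long, cnt_append,
                cnt_replicate_ne (pow_ne_pow hβ0 hβ1 (by omega : n + 1 < n + 2)),
                cnt_replicate_self]
              omega
            · rw [h, LSblk_short hβ0 hβ1,
                cnt_singleton_ne (pow_ne_pow hβ0 hβ1 (by omega : n + 1 < n + 2))]
              omega
    have e2 : n + 1 + 1 = n + 2 := rfl
    rw [e2, htake, cnt_append, cnt_append,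
      cnt_flatMap_A hL hβ0 hβ1 n l₁ hmem, cnt_flatMap_B hβ0 hβ1 n l₁ hmem]
    set a₁ := cnt (β ^ n) l₁
    set b₁ := cnt (β ^ (n + 1)) l₁
    set aq := cnt (β ^ (n + 1)) ((LSblk L S β n x).take j)
    set bq := cnt (β ^ (n + 2)) ((LSblk L S β n x).take j)
    have key : ((S * a₁ + bq : ℕ) : ℝ) - (S : ℝ) * β * ((L * a₁ + b₁ + aq : ℕ) : ℝ)
        = (-((S : ℝ) * β)) * ((b₁ : ℝ) - (S : ℝ) * β * (a₁ : ℝ))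
          + ((bq : ℝ) - (S : ℝ) * β * (aq : ℝ)) := by
      push_cast
      linear_combination (-(S : ℝ)) * (a₁ : ℝ) * hβ
    rw [key]
    have hSβ0 : (0:ℝ) < (S : ℝ) * β := by linarith
    have habs2 : |(bq : ℝ) - (S : ℝ) * β * (aq : ℝ)| ≤ (S : ℝ) + (S : ℝ) * β * L := by
      have h1 : ((bq : ℝ)) ≤ (S : ℝ) := by exact_mod_cast hbq
      have h2 : ((aq : ℝ)) ≤ (L : ℝ) := by exact_mod_cast haq
      have h3 : (0:ℝ) ≤ (bq : ℝ) := Nat.cast_nonneg _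
      have h4 : (0:ℝ) ≤ (aq : ℝ) := Nat.cast_nonneg _
      rw [abs_le]
      constructor
      · nlinarith
      · nlinarith
    calc |(-((S : ℝ) * β)) * ((b₁ : ℝ) - (S : ℝ) * β * (a₁ : ℝ))
          + ((bq : ℝ) - (S : ℝ) * β * (aq : ℝ))|
        ≤ |(-((S : ℝ) * β)) * ((b₁ : ℝ) - (S : ℝ) * β * (a₁ : ℝ))|
          + |(bq : ℝ) - (S : ℝ) * β * (aq : ℝ)| := abs_add_le _ _
      _ = (S : ℝ) * β * |(b₁ : ℝ) - (S : ℝ) * β * (a₁ : ℝ)|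
          + |(bq : ℝ) - (S : ℝ) * β * (aq : ℝ)| := by
          rw [abs_mul, abs_neg, abs_of_pos hSβ0]
      _ ≤ (S : ℝ) * β * (((S : ℝ) * β + d) * ((S : ℝ) * β) ^ n - d)
          + ((S : ℝ) + (S : ℝ) * β * L) := by
          have := mul_le_mul_of_nonneg_left hIH (le_of_lt hSβ0)
          linarith
      _ ≤ ((S : ℝ) * β + d) * ((S : ℝ) * β) ^ (n + 1) - d := by
          have hpow : ((S : ℝ) * β) ^ (n + 1) = ((S : ℝ) * β) * ((S : ℝ) * β) ^ n := by ring
          rw [hpow]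
          nlinarith [hd]

lemma LSpart_mem_pos (hβ0 : 0 < β) {n : ℕ} {x : ℝ} (hx : x ∈ LSpart L S β n) : 0 < x := by
  rcases mem_LSpart n x hx with h | h <;> rw [h] <;> positivity

lemma LSpart_mem_le (hβ0 : 0 < β) (hβ1 : β < 1) {n : ℕ} {x : ℝ}
    (hx : x ∈ LSpart L S β n) : x ≤ β ^ n := by
  rcases mem_LSpart n x hx with h | h
  · rw [h]
  · rw [h]
    calc β ^ (n + 1) = β ^ n * β := by ring
      _ ≤ β ^ n * 1 := by nlinarith [pow_pos hβ0 n]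
      _ = β ^ n := by ring

lemma sum_take_mono {l : List ℝ} (h : ∀ x ∈ l, 0 ≤ x) {i j : ℕ} (hij : i ≤ j) :
    (l.take i).sum ≤ (l.take j).sum := by
  have h1 : l.take i = (l.take j).take i := by rw [List.take_take, min_eq_left hij]
  have h2 : (l.take j).take i ++ (l.take j).drop i = l.take j := List.take_append_drop _ _
  rw [h1]
  calc ((l.take j).take i).sum
      ≤ ((l.take j).take i).sum + ((l.take j).drop i).sum := by
        refine le_add_of_nonneg_right (List.sum_nonneg fun x hx => h x ?_)
        exact ((List.drop_sublist _ _).trans (List.take_sublist _ _)).subset hx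
    _ = (l.take j).sum := by rw [← List.sum_append, h2]

lemma sum_take_le_one (hβ : (L : ℝ) * β + (S : ℝ) * β ^ 2 = 1) (hβ0 : 0 < β) (n k : ℕ) :
    ((LSpart L S β n).take k).sum ≤ 1 := by
  by_cases hk : k ≤ (LSpart L S β n).length
  · calc ((LSpart L S β n).take k).sum
        ≤ ((LSpart L S β n).take (LSpart L S β n).length).sum :=
          sum_take_mono (fun x hx => (LSpart_mem_pos hβ0 hx).le) hk
      _ = 1 := by rw [List.take_length, sum_LSpart hβ]
  · rw [List.take_of_length_le (by omega), sum_LSpart hβ]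

lemma sum_take_nonneg (hβ0 : 0 < β) (n k : ℕ) : 0 ≤ ((LSpart L S β n).take k).sum :=
  List.sum_nonneg fun x hx => (LSpart_mem_pos hβ0 ((List.take_sublist _ _).subset hx)).le

/-- `βⁿ · tₙ ≥ 1`. -/
lemma length_ge (hL : 0 < L) (hβ0 : 0 < β) (hβ1 : β < 1)
    (hβ : (L : ℝ) * β + (S : ℝ) * β ^ 2 = 1) (n : ℕ) :
    1 ≤ β ^ n * ((LSpart L S β n).length : ℝ) := by
  have h1 := count_ell (S := S) hL hβ0 hβ1 hβ n
  have h2 : (LSpart L S β n).length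
      = cnt (β ^ n) (LSpart L S β n) + cnt (β ^ (n + 1)) (LSpart L S β n) :=
    len_eq_cnt (pow_ne_pow hβ0 hβ1 (Nat.lt_succ_self n)) _ (mem_LSpart n)
  rw [h2]
  push_cast
  have hb : β ^ (n + 1) ≤ β ^ n := by
    calc β ^ (n + 1) = β ^ n * β := by ring
      _ ≤ β ^ n * 1 := by nlinarith [pow_pos hβ0 n]
      _ = β ^ n := by ring
  nlinarith [(by positivity : (0:ℝ) ≤ (cnt (β ^ (n + 1)) (LSpart L S β n) : ℝ)),
    (by positivity : (0:ℝ) ≤ (cnt (β ^ n) (LSpart L S β n) : ℝ))]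

set_option maxHeartbeats 2000000 in
lemma main_est (hL : 0 < L) (hβ0 : 0 < β) (hβ1 : β < 1)
    (hβ : (L : ℝ) * β + (S : ℝ) * β ^ 2 = 1) (hSβ : 1 < (S : ℝ) * β) :
    ∀ n k, k ≤ (LSpart L S β n).length →
      |((LSpart L S β n).take k).sum - (k : ℝ) / ((LSpart L S β n).length : ℝ)|
        ≤ ((S : ℝ) * β + ((S : ℝ) * β + ((S : ℝ) + (L : ℝ) * S * β) / ((S : ℝ) * β - 1)))
            * ((S : ℝ) * β ^ 2) ^ n := by
  intro n k hk
  set Kc : ℝ := (S : ℝ) * β + ((S : ℝ) + (L : ℝ) * S * β) / ((S : ℝ) * β - 1) with hKc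
  have hd0 : (0:ℝ) < ((S : ℝ) + (L : ℝ) * S * β) / ((S : ℝ) * β - 1) := by
    have hl0 : (0:ℝ) < L := by exact_mod_cast hL
    have hS0 : (0:ℝ) < S := by nlinarith
    apply div_pos
    · nlinarith
    · linarith
  have hSβ0 : (0:ℝ) < (S : ℝ) * β := by linarith
  have hKc0 : 0 < Kc := by rw [hKc]; linarith
  have hne := pow_ne_pow hβ0 hβ1 (Nat.lt_succ_self n)
  have hmemt : ∀ x ∈ (LSpart L S β n).take k, x = β ^ n ∨ x = β ^ (n + 1) :=
    fun x hx => mem_LSpart n x ((List.take_sublist _ _).subset hx)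
  set s : ℝ := ((LSpart L S β n).take k).sum with hss
  set a := cnt (β ^ n) ((LSpart L S β n).take k)
  set b := cnt (β ^ (n + 1)) ((LSpart L S β n).take k)
  set A := cnt (β ^ n) (LSpart L S β n)
  set B := cnt (β ^ (n + 1)) (LSpart L S β n)
  set t : ℝ := ((LSpart L S β n).length : ℝ) with htt
  have hs : s = (a : ℝ) * β ^ n + (b : ℝ) * β ^ (n + 1) := sum_eq_cnt hne _ hmemt
  have hkab : (k : ℝ) = (a : ℝ) + (b : ℝ) := by
    have := len_eq_cnt hne _ hmemt
    rw [List.length_take, min_eq_left hk] at this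
    exact_mod_cast this
  have htAB : t = (A : ℝ) + (B : ℝ) := by
    rw [htt]
    exact_mod_cast len_eq_cnt hne _ (mem_LSpart n)
  have h1 : β ^ n * (A : ℝ) + β ^ (n + 1) * (B : ℝ) = 1 := count_ell hL hβ0 hβ1 hβ n
  have hr : (B : ℝ) - (S : ℝ) * β * (A : ℝ) = (-((S : ℝ) * β)) ^ (n + 1) :=
    count_r hL hβ0 hβ1 hβ n
  have hxr : |(b : ℝ) - (S : ℝ) * β * (a : ℝ)| ≤ Kc * ((S : ℝ) * β) ^ n := by
    have := prefix_r_bound hL hβ0 hβ1 hβ hSβ n k hk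
    rw [hKc]
    linarith
  have hs0 : 0 ≤ s := sum_take_nonneg hβ0 n k
  have hs1 : s ≤ 1 := sum_take_le_one hβ hβ0 n k
  have ht1 : 1 ≤ β ^ n * t := length_ge hL hβ0 hβ1 hβ n
  have ht0 : (0:ℝ) < t := by nlinarith [pow_pos hβ0 n]
  have ident : (1 + (S : ℝ) * β ^ 2) * (t * s - k)
      = (1 - β) * (((B : ℝ) - (S : ℝ) * β * (A : ℝ)) * s - ((b : ℝ) - (S : ℝ) * β * (a : ℝ))) := by
    rw [hs, hkab, htAB]
    linear_combination (1 + (S : ℝ) * β) * ((a : ℝ) + β * (b : ℝ)) * h1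
  have hBA : |(B : ℝ) - (S : ℝ) * β * (A : ℝ)| = ((S : ℝ) * β) ^ (n + 1) := by
    rw [hr, abs_pow, abs_neg, abs_of_pos hSβ0]
  have hinner : |((B : ℝ) - (S : ℝ) * β * (A : ℝ)) * s - ((b : ℝ) - (S : ℝ) * β * (a : ℝ))|
      ≤ ((S : ℝ) * β) ^ (n + 1) + Kc * ((S : ℝ) * β) ^ n := by
    calc |((B : ℝ) - (S : ℝ) * β * (A : ℝ)) * s - ((b : ℝ) - (S : ℝ) * β * (a : ℝ))|
        ≤ |((B : ℝ) - (S : ℝ) * β * (A : ℝ)) * s| + |(b : ℝ) - (S : ℝ) * β * (a : ℝ)| := by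
          rw [sub_eq_add_neg]
          exact (abs_add_le _ _).trans (by rw [abs_neg])
      _ ≤ ((S : ℝ) * β) ^ (n + 1) + Kc * ((S : ℝ) * β) ^ n := by
          rw [abs_mul, hBA]
          have h3 : |s| ≤ 1 := abs_le.mpr ⟨by linarith, hs1⟩
          nlinarith [pow_pos hSβ0 (n + 1), abs_nonneg s]
  have hM0 : 0 ≤ ((S : ℝ) * β) ^ (n + 1) + Kc * ((S : ℝ) * β) ^ n := by positivity
  have hdenom : (0:ℝ) < 1 + (S : ℝ) * β ^ 2 := by nlinarith
  have hSβn : (0:ℝ) ≤ ((S : ℝ) * β) ^ n := by positivity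
  have habs : |t * s - (k : ℝ)| ≤ ((S : ℝ) * β + Kc) * ((S : ℝ) * β) ^ n := by
    have h4 : (1 + (S : ℝ) * β ^ 2) * |t * s - (k : ℝ)|
        ≤ (1 - β) * (((S : ℝ) * β) ^ (n + 1) + Kc * ((S : ℝ) * β) ^ n) := by
      have h5 : |(1 + (S : ℝ) * β ^ 2) * (t * s - (k : ℝ))|
          = (1 + (S : ℝ) * β ^ 2) * |t * s - (k : ℝ)| := by
        rw [abs_mul, abs_of_pos hdenom]
      rw [← h5, ident, abs_mul, abs_of_pos (by linarith : (0:ℝ) < 1 - β)]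
      exact mul_le_mul_of_nonneg_left hinner (by linarith)
    have h6 : ((S : ℝ) * β) ^ (n + 1) = ((S : ℝ) * β) * ((S : ℝ) * β) ^ n := by ring
    nlinarith [abs_nonneg (t * s - (k : ℝ)),
      mul_nonneg (mul_nonneg (le_of_lt hSβ0) hβ0.le) (abs_nonneg (t * s - (k : ℝ))),
      mul_nonneg hβ0.le hM0]
  have hq : ((S : ℝ) * β ^ 2) ^ n = ((S : ℝ) * β) ^ n * β ^ n := by
    rw [show (S : ℝ) * β ^ 2 = ((S : ℝ) * β) * β by ring, mul_pow]
  have expand : s - (k : ℝ) / t = (t * s - (k : ℝ)) / t := by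
    rw [sub_div, mul_div_cancel_left₀ _ (ne_of_gt ht0)]
  rw [expand, abs_div, abs_of_pos ht0, div_le_iff₀ ht0, hq]
  have hfin : ((S : ℝ) * β + Kc) * ((S : ℝ) * β) ^ n
      ≤ ((S : ℝ) * β + Kc) * ((S : ℝ) * β) ^ n * (β ^ n * t) := by
    nlinarith [mul_nonneg (mul_nonneg (by linarith : (0:ℝ) ≤ (S : ℝ) * β + Kc) hSβn)
      (by linarith : (0:ℝ) ≤ β ^ n * t - 1)]
  calc |t * s - (k : ℝ)| ≤ ((S : ℝ) * β + Kc) * ((S : ℝ) * β) ^ n := habs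
    _ ≤ ((S : ℝ) * β + Kc) * ((S : ℝ) * β) ^ n * (β ^ n * t) := hfin
    _ = ((S : ℝ) * β + Kc) * (((S : ℝ) * β) ^ n * β ^ n) * t := by ring
lemma count_est (hL : 0 < L) (hβ0 : 0 < β) (hβ1 : β < 1)
    (hβ : (L : ℝ) * β + (S : ℝ) * β ^ 2 = 1) (hSβ : 1 < (S : ℝ) * β)
    (n : ℕ) {b : ℝ} (hb0 : 0 < b) (hb1 : b ≤ 1) :
    |(countBelow L S β n b : ℝ) / ((LSpart L S β n).length : ℝ) - b|
      ≤ (((S : ℝ) * β + ((S : ℝ) * β + ((S : ℝ) + (L : ℝ) * S * β) / ((S : ℝ) * β - 1))) + 1)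
          * ((S : ℝ) * β ^ 2) ^ n := by
  classical
  have hlep_len : lep L S β n (LSpart L S β n).length = 1 := by
    rw [lep, List.take_length, sum_LSpart hβ]
  have hex : ∃ j, b ≤ lep L S β n j := ⟨(LSpart L S β n).length, by rw [hlep_len]; exact hb1⟩
  set kb := Nat.find hex with hkbdef
  have hkb : b ≤ lep L S β n kb := Nat.find_spec hex
  have hkbt : kb ≤ (LSpart L S β n).length := Nat.find_le (by rw [hlep_len]; exact hb1)
  have hmin : ∀ j, j < kb → lep L S β n j < b := fun j hj =>
    lt_of_not_ge (Nat.find_min hex hj)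
  have hpos : ∀ x ∈ LSpart L S β n, (0:ℝ) ≤ x := fun x hx => (LSpart_mem_pos hβ0 hx).le
  have hlepmono : ∀ i j : ℕ, i ≤ j → lep L S β n i ≤ lep L S β n j := fun i j hij =>
    sum_take_mono hpos hij
  have hkb1 : 1 ≤ kb := by
    rcases Nat.eq_zero_or_pos kb with h | h
    · exfalso
      have : lep L S β n 0 = 0 := by rw [lep, List.take_zero, List.sum_nil]
      rw [h, this] at hkb
      linarith
    · exact h
  have hcount : countBelow L S β n b = kb := by
    have hset : {j : Fin (LSpart L S β n).length | lep L S β n ↑j < b}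
        = Set.range (fun i : Fin kb => Fin.castLE hkbt i) := by
      ext j
      simp only [Set.mem_setOf_eq, Set.mem_range]
      constructor
      · intro hj
        have hjkb : (j : ℕ) < kb := by
          by_contra hcon
          push_neg at hcon
          have := hlepmono kb j hcon
          linarith
        exact ⟨⟨(j : ℕ), hjkb⟩, by apply Fin.ext; rfl⟩
      · rintro ⟨i, rfl⟩
        exact hmin i i.2
    rw [countBelow, hset, ← Nat.card_coe_set_eq,
      Nat.card_range_of_injective (Fin.castLE_injective hkbt),
      Nat.card_eq_fintype_card, Fintype.card_fin]
  set Kc : ℝ := (S : ℝ) * β + ((S : ℝ) + (L : ℝ) * S * β) / ((S : ℝ) * β - 1) with hKc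
  set t : ℝ := ((LSpart L S β n).length : ℝ) with htt
  have ht1 : 1 ≤ β ^ n * t := length_ge hL hβ0 hβ1 hβ n
  have ht0 : (0:ℝ) < t := by nlinarith [pow_pos hβ0 n]
  have hinvt : 1 / t ≤ β ^ n := by rw [div_le_iff₀ ht0]; linarith
  have hq0 : (0:ℝ) < (S : ℝ) * β ^ 2 := by nlinarith
  have hβq : β ^ n ≤ ((S : ℝ) * β ^ 2) ^ n := by
    apply pow_le_pow_left₀ hβ0.le
    nlinarith
  have hup := main_est hL hβ0 hβ1 hβ hSβ n (kb - 1) (by omega)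
  have hdn := main_est hL hβ0 hβ1 hβ hSβ n kb hkbt
  rw [← lep] at hup hdn
  rw [← htt] at hup hdn
  have hcast : (kb : ℝ) = ((kb - 1 : ℕ) : ℝ) + 1 := by
    have h : kb - 1 + 1 = kb := by omega
    calc (kb : ℝ) = ((kb - 1 + 1 : ℕ) : ℝ) := by rw [h]
      _ = ((kb - 1 : ℕ) : ℝ) + 1 := by push_cast; ring
  rw [← hKc] at hup hdn
  have hup' : ((kb - 1 : ℕ) : ℝ) / t - lep L S β n (kb - 1)
      ≤ ((S : ℝ) * β + Kc) * ((S : ℝ) * β ^ 2) ^ n := by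
    linarith [(abs_le.mp hup).1]
  have hdn' : lep L S β n kb - (kb : ℝ) / t
      ≤ ((S : ℝ) * β + Kc) * ((S : ℝ) * β ^ 2) ^ n := (abs_le.mp hdn).2
  have hlt : lep L S β n (kb - 1) < b := hmin (kb - 1) (by omega)
  have hqn : (0:ℝ) ≤ ((S : ℝ) * β ^ 2) ^ n := by positivity
  have h3 : (1:ℝ) / t ≤ ((S : ℝ) * β ^ 2) ^ n := le_trans hinvt hβq
  have hkbsplit : (kb : ℝ) / t = ((kb - 1 : ℕ) : ℝ) / t + 1 / t := by
    rw [hcast, add_div]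
  rw [hcount, abs_le]
  constructor
  · linarith
  · rw [hkbsplit] at *
    linarith

end Main

/-- If `S > L + 1`, there is a constant `C₃ > 0`, depending only on `L` and `S`, with
`(Sβ²)⁻ⁿ · D*(ρⁿ) ≤ C₃` for all `n ≥ 1`; i.e. `D*(ρⁿ) ≤ C₃ (Sβ²)ⁿ`. -/
theorem starDisc_le_of_S_gt (L S : ℕ) (hL : 0 < L) (hS : 0 < S) (hLS : L + 1 < S)
    (β : ℝ) (hβ0 : 0 < β) (hβ1 : β < 1)
    (hβ : (L : ℝ) * β + (S : ℝ) * β ^ 2 = 1) :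
    ∃ C₃ : ℝ, 0 < C₃ ∧ ∀ n : ℕ, 1 ≤ n →
      (((S : ℝ) * β ^ 2) ^ n)⁻¹ * starDisc L S β n ≤ C₃ ∧
      starDisc L S β n ≤ C₃ * ((S : ℝ) * β ^ 2) ^ n := by
  have hl0 : (0:ℝ) < L := by exact_mod_cast hL
  have hS2 : ((L : ℝ) + 2) ≤ (S : ℝ) := by exact_mod_cast hLS
  have hSβ : 1 < (S : ℝ) * β := by
    by_contra hcon
    push_neg at hcon
    nlinarith
  have hq0 : (0:ℝ) < (S : ℝ) * β ^ 2 := by nlinarith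
  set C₃ : ℝ := ((S : ℝ) * β + ((S : ℝ) * β + ((S : ℝ) + (L : ℝ) * S * β) / ((S : ℝ) * β - 1))) + 1
    with hC₃
  have hd0 : (0:ℝ) < ((S : ℝ) + (L : ℝ) * S * β) / ((S : ℝ) * β - 1) := by
    have hS0 : (0:ℝ) < S := by nlinarith
    apply div_pos
    · nlinarith
    · linarith
  have hC₃0 : 0 < C₃ := by rw [hC₃]; nlinarith
  refine ⟨C₃, hC₃0, fun n _ => ?_⟩
  have hqn : (0:ℝ) < ((S : ℝ) * β ^ 2) ^ n := pow_pos hq0 n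
  have hmain : starDisc L S β n ≤ C₃ * ((S : ℝ) * β ^ 2) ^ n := by
    apply Real.sSup_le
    · rintro x ⟨b, hb0, hb1, rfl⟩
      rw [hC₃]
      exact count_est hL hβ0 hβ1 hβ hSβ n hb0 hb1
    · positivity
  refine ⟨?_, hmain⟩
  rw [inv_mul_le_iff₀ hqn, mul_comm]
  exact hmain
end

section
/- Fix positive integers L and S with S > L + 1, let β ∈ (0,1) satisfy Lβ + Sβ² = 1, define (tₙ) by t₀ = 1, t₁ = L + S, tₙ = L tₙ₋₁ + S tₙ₋₂, and set γ = 1 + log(Sβ)/log β and A = (1 + Sβ)/(1 + Sβ²). Then (Sβ²)ⁿ · tₙ^γ converges to A^γ as n → ∞; in particular (Sβ²)ⁿ and 1/tₙ^γ have the same order at infinity. -/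
open Filter

/-- Fix positive integers `L` and `S` with `S > L + 1`, let `β ∈ (0,1)` satisfy
`L β + S β² = 1`, define `(tₙ)` by `t₀ = 1`, `t₁ = L + S`, `tₙ = L tₙ₋₁ + S tₙ₋₂`, and
set `γ = 1 + log(Sβ)/log β` and `A = (1 + Sβ)/(1 + Sβ²)`. Then `(Sβ²)ⁿ · tₙ^γ → A^γ`
as `n → ∞`. -/
theorem Sbeta_sq_pow_mul_t_rpow_tendsto (L S : ℕ) (hL : 0 < L) (hS : 0 < S)
    (hLS : L + 1 < S) (β : ℝ) (hβ0 : 0 < β) (hβ1 : β < 1)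
    (hβ : (L : ℝ) * β + (S : ℝ) * β ^ 2 = 1)
    (t : ℕ → ℝ) (ht0 : t 0 = 1) (ht1 : t 1 = L + S)
    (htrec : ∀ n, t (n + 2) = L * t (n + 1) + S * t n) :
    Tendsto
      (fun n : ℕ => ((S : ℝ) * β ^ 2) ^ n *
        t n ^ (1 + Real.log ((S : ℝ) * β) / Real.log β))
      atTop
      (nhds (((1 + (S : ℝ) * β) / (1 + (S : ℝ) * β ^ 2)) ^
        (1 + Real.log ((S : ℝ) * β) / Real.log β))) := by
  have hLpos : (0:ℝ) < L := by exact_mod_cast hL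
  have hSpos : (0:ℝ) < S := by exact_mod_cast hS
  set γ : ℝ := 1 + Real.log ((S : ℝ) * β) / Real.log β with hγ
  set A : ℝ := (1 + (S : ℝ) * β) / (1 + (S : ℝ) * β ^ 2) with hA
  set c : ℝ := -((S : ℝ) * β ^ 2) with hc
  have hSβ2pos : (0:ℝ) < S * β ^ 2 := by positivity
  have hSβ2lt1 : (S:ℝ) * β ^ 2 < 1 := by nlinarith
  have hApos : 0 < A := by
    apply div_pos <;> nlinarith
  -- positivity of t
  have htpos : ∀ n, 0 < t n := by
    have key : ∀ n, 0 < t n ∧ 0 < t (n + 1) := by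
      intro n
      induction n with
      | zero => constructor <;> simp [ht0, ht1] <;> positivity
      | succ k ih =>
        refine ⟨ih.2, ?_⟩
        rw [htrec]
        nlinarith [ih.1, ih.2]
    exact fun n => (key n).1
  -- closed form for βⁿ tₙ
  have hform : ∀ n, β ^ n * t n = A + (1 - A) * c ^ n := by
    have hden : (1 : ℝ) + (S:ℝ) * β ^ 2 ≠ 0 := by positivity
    have hAden : A * (1 + (S:ℝ) * β ^ 2) = 1 + (S:ℝ) * β := by
      rw [hA]; field_simp
    have key : ∀ n, β ^ n * t n = A + (1 - A) * c ^ n ∧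
        β ^ (n+1) * t (n+1) = A + (1 - A) * c ^ (n+1) := by
      intro n
      induction n with
      | zero =>
        constructor
        · simp only [pow_zero, one_mul, mul_one, ht0]; ring
        · simp only [pow_one, ht1]
          rw [hc]
          linear_combination hβ - hAden
      | succ k ih =>
        refine ⟨ih.2, ?_⟩
        have := htrec k
        have h1 := ih.1
        have h2 := ih.2
        have e : β ^ (k+2) * t (k+2)
            = (L:ℝ) * β * (β ^ (k+1) * t (k+1)) + (S:ℝ) * β ^ 2 * (β ^ k * t k) := by
          rw [this]; ring
        rw [e, h1, h2]
        have hc2 : c ^ (k+2) = (L:ℝ) * β * c ^ (k+1) + (S:ℝ) * β ^ 2 * c ^ k := by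
          have : c ^ 2 = (L:ℝ) * β * c + (S:ℝ) * β ^ 2 := by
            rw [hc]; linear_combination ((S:ℝ) * β ^ 2) * hβ
          calc c ^ (k+2) = c ^ 2 * c ^ k := by ring
            _ = ((L:ℝ) * β * c + (S:ℝ) * β ^ 2) * c ^ k := by rw [this]
            _ = (L:ℝ) * β * c ^ (k+1) + (S:ℝ) * β ^ 2 * c ^ k := by ring
        rw [hc2]; linear_combination A * hβ
    exact fun n => (key n).1
  -- βⁿ tₙ → A
  have htend : Tendsto (fun n : ℕ => β ^ n * t n) atTop (nhds A) := by
    have habs : |c| < 1 := by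
      rw [hc, abs_neg, abs_of_pos hSβ2pos]; exact hSβ2lt1
    have h0 : Tendsto (fun n : ℕ => c ^ n) atTop (nhds 0) :=
      tendsto_pow_atTop_nhds_zero_of_abs_lt_one habs
    have : Tendsto (fun n : ℕ => A + (1 - A) * c ^ n) atTop (nhds (A + (1 - A) * 0)) :=
      tendsto_const_nhds.add (tendsto_const_nhds.mul h0)
    simp only [mul_zero, add_zero] at this
    exact this.congr (fun n => (hform n).symm)
  -- β^γ = Sβ²
  have hSβpos : (0:ℝ) < S * β := by positivity
  have hlogβ : Real.log β ≠ 0 := by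
    exact Real.log_ne_zero_of_pos_of_ne_one hβ0 (ne_of_lt hβ1)
  have hβγ : β ^ γ = (S:ℝ) * β ^ 2 := by
    rw [hγ, Real.rpow_add hβ0, Real.rpow_one]
    have : β ^ (Real.log ((S:ℝ) * β) / Real.log β) = (S:ℝ) * β := by
      rw [Real.rpow_def_of_pos hβ0, mul_comm, div_mul_cancel₀ _ hlogβ,
        Real.exp_log hSβpos]
    rw [this]; ring
  -- main rewrite
  have heq : ∀ n : ℕ, ((S : ℝ) * β ^ 2) ^ n * t n ^ γ = (β ^ n * t n) ^ γ := by
    intro n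
    rw [Real.mul_rpow (by positivity) (le_of_lt (htpos n)), ← hβγ,
      ← Real.rpow_natCast (β ^ γ) n, ← Real.rpow_mul (le_of_lt hβ0),
      mul_comm γ (n:ℝ), Real.rpow_mul (le_of_lt hβ0), Real.rpow_natCast]
  have : Tendsto (fun n : ℕ => (β ^ n * t n) ^ γ) atTop (nhds (A ^ γ)) :=
    htend.rpow_const (Or.inl (ne_of_gt hApos))
  exact this.congr (fun n => (heq n).symm)
end
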